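/- arXiv:1510.03133 — 8 statements merged into one kernel-verified Lean document; each statement's English description precedes it below -/
import Mathlib

section
/- Every finite (k,k)-grounded flag complex is connected. -/
open scoped Classical

/-- Every finite (k,k)-grounded flag complex is connected.

A flag complex is determined by its 1-skeleton, a simple graph `G`: the simplices
are exactly the cliques of `G`.  An `n`-simplex `Δ` (a clique with `n+1` vertices)
is a `k`-ground if every vertex of the complex is adjacent (or equal) to all but at
most `k` vertices of `Δ`.  Connectedness of the flag complex is equivalent to
connectedness of the graph `G`. -/
theorem stmt_1 {V : Type*} [Fintype V] (G : SimpleGraph V) (k : ℕ) (hk : 1 ≤ k)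
    (Δ : Finset V) (hclique : G.IsClique ↑Δ) (hcard : Δ.card = k + 1)
    (hground : ∀ v : V, (Δ.filter (fun u => ¬ (G.Adj v u ∨ v = u))).card ≤ k) :
    G.Connected := by
  have key : ∀ v : V, ∃ a ∈ Δ, G.Adj v a ∨ v = a := by
    intro v
    by_contra h
    push_neg at h
    have : Δ.filter (fun u => ¬ (G.Adj v u ∨ v = u)) = Δ := by
      apply Finset.filter_true_of_mem
      intro u hu
      simpa [not_or] using h u hu
    have h2 := hground v
    rw [this, hcard] at h2
    omega
  have reach : ∀ v : V, ∀ a ∈ Δ, G.Reachable v a := by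
    intro v a ha
    obtain ⟨b, hb, hvb⟩ := key v
    have hba : G.Reachable b a := by
      rcases eq_or_ne b a with rfl | hne
      · exact SimpleGraph.Reachable.refl _
      · exact (hclique hb ha hne).reachable
    rcases hvb with hadj | rfl
    · exact hadj.reachable.trans hba
    · exact hba
  have hne : Δ.Nonempty := by
    rw [← Finset.card_pos, hcard]; omega
  obtain ⟨a, ha⟩ := hne
  rw [SimpleGraph.connected_iff]
  refine ⟨fun u v => (reach u a ha).trans (reach v a ha).symm, ⟨a⟩⟩
end

section
/- For all m, k ≥ 1, every finite (mk, k)-grounded flag complex is (m−1)-connected. -/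
open scoped Classical

/-- The geometric realization of the flag complex determined by the simple graph `G`
(simplices = cliques of `G`): the set of convex-combination weight functions whose
support is a clique. -/
def flagRealization {V : Type*} [Fintype V] (G : SimpleGraph V) : Set (V → ℝ) :=
  {w | (∀ v, 0 ≤ w v) ∧ (∑ v, w v = 1) ∧ G.IsClique {v | w v ≠ 0}}

/-- A topological space is `n`-connected if it is nonempty and all homotopy groups
`π_i` for `i ≤ n` (based at any point) are trivial; in particular `π_0` is a
singleton, i.e. the space is path-connected. -/
def IsNConnectedSpace (n : ℕ) (X : Type*) [TopologicalSpace X] : Prop :=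
  Nonempty X ∧ ∀ i ≤ n, ∀ x : X, Subsingleton (HomotopyGroup (Fin i) X x)

/-!
Let `f` be a generalized `i`-loop with `i + 1 ≤ m`. On a grid of mesh `1 / N` label every grid
point `q` by a vertex `vf q` that carries weight of `f` on a neighbourhood of `q`, and interpolate
with the hat functions of the Freudenthal–Kuhn triangulation. At every point of the cube the active
grid points form a chain, so there are at most `i + 1 ≤ m` of them; their labels lie in the support
of `f z`, and any `m` vertices have a common neighbour in the ground `Δ`, because each of them
misses at most `k` of the `mk + 1` vertices of `Δ`.

Cutting the hat weights at a level `c` and moving the part below `c` from the labels of each level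
set `S` to a common `Δ`-neighbour `uf S` of these labels keeps every point in a simplex; as
`c` runs from `0` to `1` this deforms the approximation into the simplex `Δ`. Near the boundary of
the cube `f` stays close to the base point `x`, so blending with `x` in a thin collar makes all
the deformations relative to the boundary. Every loop is thereby homotopic to one canonical loop.
-/

open Finset Function Filter unitInterval AffineMap

namespace FlagComplex

section Preliminaries

variable {V : Type*} {G : SimpleGraph V}

theorem exists_mem_forall_adj_or_eq {Δ B : Finset V} {k : ℕ}
    (hground : ∀ v : V, (Δ.filter (fun u => ¬ (G.Adj v u ∨ v = u))).card ≤ k)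
    (hB : B.card * k < Δ.card) : ∃ u ∈ Δ, ∀ b ∈ B, G.Adj b u ∨ b = u := by
  set bad := B.biUnion fun b => Δ.filter fun u => ¬ (G.Adj b u ∨ b = u)
  have hbad : bad.card < Δ.card := calc
    bad.card ≤ ∑ b ∈ B, (Δ.filter fun u => ¬ (G.Adj b u ∨ b = u)).card := card_biUnion_le
    _ ≤ B.card * k := by simpa using sum_le_sum fun b _ => hground b
    _ < Δ.card := hB
  obtain ⟨u, hu, hubad⟩ := exists_mem_notMem_of_card_lt_card hbad
  refine ⟨u, hu, fun b hb => ?_⟩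
  by_contra h
  exact hubad (mem_biUnion.2 ⟨b, hb, mem_filter.2 ⟨hu, h⟩⟩)

theorem isClique_pair_of_adj_or_eq {a b : V} (h : G.Adj a b ∨ a = b) : G.IsClique {a, b} :=
  SimpleGraph.isClique_pair.2 h.resolve_right

theorem support_lineMap_subset (a b : V → ℝ) (t : ℝ) :
    support (lineMap a b t) ⊆ support a ∪ support b := by
  rw [lineMap_apply_module]
  exact (support_add _ _).trans
    (Set.union_subset_union (support_smul_subset_right _ _) (support_smul_subset_right _ _))

theorem homotopicRel_curry {Y Z : Type*} [TopologicalSpace Y] [TopologicalSpace Z]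
    (F : C(I × Y, Z)) {S : Set Y} (hS : ∀ t, ∀ y ∈ S, F (t, y) = F (0, y)) :
    (F.curry 0).HomotopicRel (F.curry 1) S :=
  ⟨{ toContinuousMap := F
     map_zero_left := fun _ => rfl
     map_one_left := fun _ => rfl
     prop' := fun t y hy => hS t y hy }⟩

end Preliminaries

section Realization

variable {V : Type*} [Fintype V] {G : SimpleGraph V}

theorem mem_flagRealization_iff {w : V → ℝ} :
    w ∈ flagRealization G ↔ w ∈ stdSimplex ℝ V ∧ G.IsClique (support w) :=
  and_assoc.symm

theorem single_mem_flagRealization (v : V) : Pi.single v 1 ∈ flagRealization G :=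
  mem_flagRealization_iff.2 ⟨single_mem_stdSimplex ℝ v,
    (G.isClique_singleton v).subset Pi.support_single_subset⟩

theorem support_nonempty_of_mem_flagRealization {w : V → ℝ} (hw : w ∈ flagRealization G) :
    (support w).Nonempty := by
  by_contra h
  have : ∑ v, w v = 0 := sum_eq_zero fun v _ => by
    by_contra hv; exact h ⟨v, hv⟩
  exact zero_ne_one (this.symm.trans hw.2.1)

theorem lineMap_mem_flagRealization {a b : V → ℝ} (ha : a ∈ flagRealization G)
    (hb : b ∈ flagRealization G) (hab : G.IsClique (support a ∪ support b)) {t : ℝ}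
    (ht : t ∈ Set.Icc (0 : ℝ) 1) : lineMap a b t ∈ flagRealization G := by
  refine mem_flagRealization_iff.2 ⟨?_, hab.subset (support_lineMap_subset a b t)⟩
  rw [lineMap_apply_module]
  exact convex_stdSimplex ℝ V (mem_flagRealization_iff.1 ha).1 (mem_flagRealization_iff.1 hb).1
    (by linarith [ht.2]) ht.1 (by ring)

theorem homotopicRel_of_isClique {Y : Type*} [TopologicalSpace Y]
    {f g : C(Y, flagRealization G)} {S : Set Y} (hS : ∀ y ∈ S, f y = g y)
    (hfg : ∀ y, G.IsClique (support (f y : V → ℝ) ∪ support (g y : V → ℝ))) :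
    f.HomotopicRel g S := by
  refine ⟨{ toFun := fun p => ⟨lineMap (f p.2 : V → ℝ) (g p.2) (p.1 : ℝ),
              lineMap_mem_flagRealization (f p.2).2 (g p.2).2 (hfg p.2) p.1.2⟩
            continuous_toFun := ?_
            map_zero_left := fun y => by simp
            map_one_left := fun y => by simp
            prop' := fun t y hy => by simp [hS y hy] }⟩
  simp only [lineMap_apply_module]
  fun_prop

end Realization

section Fold

variable {ι α : Type*}

theorem init_le_fold_max [LinearOrder α] (s : Finset ι) (b : α) (f : ι → α) :
    b ≤ s.fold max b f :=
  (le_fold_max _).2 (Or.inl le_rfl)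

theorem fold_min_le_init [LinearOrder α] (s : Finset ι) (b : α) (f : ι → α) :
    s.fold min b f ≤ b :=
  (fold_min_le _).2 (Or.inl le_rfl)

theorem continuous_finset_fold {X : Type*} [TopologicalSpace X] [TopologicalSpace α]
    {op : α → α → α} [Std.Commutative op] [Std.Associative op] (hop : Continuous (uncurry op))
    (s : Finset ι) {b : X → α} {f : ι → X → α} (hb : Continuous b)
    (hf : ∀ j ∈ s, Continuous (f j)) : Continuous fun x => s.fold op (b x) (f · x) := by
  induction s using Finset.cons_induction with
  | empty => simpa using hb
  | cons j s hj ih =>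
    simp only [fold_cons]
    exact hop.comp ((hf j (mem_cons_self j s)).prodMk (ih fun l hl => hf l (mem_cons_of_mem hl)))

end Fold

section KuhnHat

variable {ι : Type*} [Fintype ι]

/-- The oscillation of `y` with an extra zero coordinate adjoined:
`max 0 (maxⱼ y j) - min 0 (minⱼ y j)`. -/
def osc (y : ι → ℝ) : ℝ :=
  univ.fold max 0 fun p : Option ι × Option ι => p.1.elim 0 y - p.2.elim 0 y

/-- The hat function at the origin of the Freudenthal–Kuhn triangulation of `ℝ^ι`. -/
def kuhnHat (y : ι → ℝ) : ℝ := max 0 (1 - osc y)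

theorem sub_le_osc (y : ι → ℝ) (a b : Option ι) : a.elim 0 y - b.elim 0 y ≤ osc y :=
  (le_fold_max _).2 (Or.inr ⟨(a, b), mem_univ _, le_rfl⟩)

theorem kuhnHat_le_one (y : ι → ℝ) : kuhnHat y ≤ 1 :=
  max_le zero_le_one (by linarith [sub_le_osc y none none])

theorem osc_lt_one_of_kuhnHat_pos {y : ι → ℝ} (h : 0 < kuhnHat y) : osc y < 1 := by
  by_contra! h'
  exact h.ne' (max_eq_left (by linarith))

theorem continuous_kuhnHat : Continuous (kuhnHat : (ι → ℝ) → ℝ) := by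
  refine continuous_const.max (continuous_const.sub ?_)
  refine continuous_finset_fold continuous_max univ continuous_const fun p _ => ?_
  rcases p with ⟨_ | a, _ | b⟩ <;> simp only [Option.elim] <;> fun_prop

theorem abs_lt_one_of_kuhnHat_pos {y : ι → ℝ} (h : 0 < kuhnHat y) (j : ι) : |y j| < 1 := by
  have := osc_lt_one_of_kuhnHat_pos h
  have h₁ := sub_le_osc y (some j) none
  have h₂ := sub_le_osc y none (some j)
  simp only [Option.elim] at h₁ h₂
  exact abs_lt.2 ⟨by linarith, by linarith⟩

theorem kuhnHat_pos_of_mem_Ico {y : ι → ℝ} (hy : ∀ j, y j ∈ Set.Ico (0 : ℝ) 1) :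
    0 < kuhnHat y := by
  have hy' : ∀ a : Option ι, a.elim 0 y ∈ Set.Ico (0 : ℝ) 1 := by
    rintro (_ | a)
    exacts [⟨le_rfl, one_pos⟩, hy a]
  have : osc y < 1 := (fold_max_lt _).2 ⟨one_pos, fun p _ => by
    linarith [(hy' p.1).2, (hy' p.2).1]⟩
  exact lt_max_of_lt_right (by linarith)

theorem le_or_le_of_kuhnHat_pos {y : ι → ℝ} {p p' : ι → ℕ}
    (h : 0 < kuhnHat fun j => y j - p j) (h' : 0 < kuhnHat fun j => y j - p' j) :
    p ≤ p' ∨ p' ≤ p := by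
  by_contra! hpp
  simp only [Pi.le_def, not_forall, not_le] at hpp
  obtain ⟨⟨j, hj⟩, ⟨l, hl⟩⟩ := hpp
  have hj' : (p' j : ℝ) + 1 ≤ p j := by exact_mod_cast hj
  have hl' : (p l : ℝ) + 1 ≤ p' l := by exact_mod_cast hl
  have h₁ := sub_le_osc (fun j => y j - p j) (some l) (some j)
  have h₂ := sub_le_osc (fun j => y j - p' j) (some j) (some l)
  simp only [Option.elim] at h₁ h₂
  linarith [osc_lt_one_of_kuhnHat_pos h, osc_lt_one_of_kuhnHat_pos h']

theorem card_le_of_isChain {s : Finset (ι → ℕ)} (hs : IsChain (· ≤ ·) (s : Set (ι → ℕ)))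
    {a : ι → ℕ} (ha : ∀ p ∈ s, a ≤ p ∧ p ≤ a + 1) : s.card ≤ Fintype.card ι + 1 := by
  have hinj : Set.InjOn (fun p : ι → ℕ => ∑ j, p j) s := by
    intro p hp p' hp' hsum
    by_contra hne
    rcases hs hp hp' hne with hle | hle
    · exact hne (funext fun j =>
        (sum_eq_sum_iff_of_le fun j _ => hle j).1 hsum j (mem_univ j))
    · exact hne (funext fun j =>
        ((sum_eq_sum_iff_of_le fun j _ => hle j).1 hsum.symm j (mem_univ j)).symm)
  have himage : s.image (fun p : ι → ℕ => ∑ j, p j) ⊆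
      Icc (∑ j, a j) (∑ j, a j + Fintype.card ι) := by
    intro n hn
    obtain ⟨p, hp, rfl⟩ := mem_image.1 hn
    refine mem_Icc.2 ⟨sum_le_sum fun j _ => (ha p hp).1 j, ?_⟩
    calc ∑ j, p j ≤ ∑ j, (a j + 1) := sum_le_sum fun j _ => (ha p hp).2 j
      _ = ∑ j, a j + Fintype.card ι := by simp [sum_add_distrib]
  calc s.card = (s.image fun p : ι → ℕ => ∑ j, p j).card := (card_image_of_injOn hinj).symm
    _ ≤ (Icc (∑ j, a j) (∑ j, a j + Fintype.card ι)).card := card_le_card himage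
    _ = Fintype.card ι + 1 := by simp; omega

theorem card_filter_kuhnHat_pos_le (N : ℕ) (y : ι → ℝ) :
    (univ.filter fun q : ι → Fin (N + 1) => 0 < kuhnHat fun j => y j - (q j : ℕ)).card
      ≤ Fintype.card ι + 1 := by
  set s := univ.filter fun q : ι → Fin (N + 1) => 0 < kuhnHat fun j => y j - (q j : ℕ)
  have hval : Injective fun (q : ι → Fin (N + 1)) (j : ι) => (q j : ℕ) :=
    fun q q' h => funext fun j => Fin.ext (congrFun h j)
  rw [← card_image_of_injective s hval]
  refine card_le_of_isChain (a := fun j => ⌊y j⌋₊) ?_ ?_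
  · rintro _ hp _ hp' -
    obtain ⟨q, hq, rfl⟩ := mem_image.1 hp
    obtain ⟨q', hq', rfl⟩ := mem_image.1 hp'
    exact le_or_le_of_kuhnHat_pos (mem_filter.1 hq).2 (mem_filter.1 hq').2
  · intro p hp
    obtain ⟨q, hq, rfl⟩ := mem_image.1 hp
    have hwin := abs_lt_one_of_kuhnHat_pos (mem_filter.1 hq).2
    refine ⟨fun j => ?_, fun j => ?_⟩
    · have := (abs_lt.1 (hwin j)).2
      rcases le_or_gt 0 (y j) with hy | hy
      · have : (⌊y j⌋₊ : ℝ) < (q j : ℕ) + 1 := by linarith [Nat.floor_le hy]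
        exact Nat.lt_succ_iff.1 (by exact_mod_cast this)
      · simp [Nat.floor_eq_zero.2 (hy.trans one_pos)]
    · have : ((q j : ℕ) : ℝ) < ⌊y j⌋₊ + 2 := by
        linarith [(abs_lt.1 (hwin j)).1, Nat.lt_floor_add_one (y j)]
      show (q j : ℕ) ≤ ⌊y j⌋₊ + 1
      exact Nat.lt_succ_iff.1 (by exact_mod_cast this)

theorem exists_kuhnHat_pos {N : ℕ} {y : ι → ℝ} (hy : ∀ j, y j ∈ Set.Icc (0 : ℝ) N) :
    ∃ q : ι → Fin (N + 1), 0 < kuhnHat fun j => y j - (q j : ℕ) := by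
  refine ⟨fun j => ⟨⌊y j⌋₊, Nat.lt_succ_iff.2 (Nat.floor_le_of_le (hy j).2)⟩,
    kuhnHat_pos_of_mem_Ico fun j => ⟨?_, ?_⟩⟩
  · simpa using Nat.floor_le (hy j).1
  · simpa [sub_lt_iff_lt_add'] using Nat.lt_floor_add_one (y j)

end KuhnHat

section LevelMix

variable {P V : Type*} [Fintype P] {G : SimpleGraph V}

/-- The length of the interval of thresholds `t ∈ [0, c)` for which `S = {p | t < w p}`. -/
noncomputable def gap (w : P → ℝ) (c : ℝ) (S : Finset P) : ℝ :=
  max 0 (S.fold min c w - Sᶜ.fold max 0 w)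

noncomputable def levelMass (w : P → ℝ) (c : ℝ) : ℝ := ∑ p, max 0 (w p - c) + ∑ S, gap w c S

/-- Cutting the weights `w` at level `c`: the part of `w p` above `c` stays on the vertex `vf p`,
the part below `c` is moved, level set by level set, to the vertex `uf S` of the level set `S`. -/
noncomputable def levelMix (vf : P → V) (uf : Finset P → V) (w : P → ℝ) (c : ℝ) : V → ℝ :=
  (levelMass w c)⁻¹ • (∑ p, max 0 (w p - c) • Pi.single (vf p) 1
    + ∑ S, gap w c S • Pi.single (uf S) 1)

variable {vf : P → V} {uf : Finset P → V} {w : P → ℝ} {c : ℝ} {S : Finset P}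

theorem gap_nonneg : 0 ≤ gap w c S := le_max_left _ _

theorem fold_max_lt_fold_min_of_gap_pos (h : 0 < gap w c S) :
    Sᶜ.fold max 0 w < S.fold min c w := by
  by_contra! h'
  exact h.ne' (max_eq_left (by linarith))

theorem pos_of_gap_pos (h : 0 < gap w c S) : 0 < c := by
  linarith [fold_max_lt_fold_min_of_gap_pos h, init_le_fold_max Sᶜ 0 w, fold_min_le_init S c w]

theorem pos_of_mem_of_gap_pos (h : 0 < gap w c S) {p : P} (hp : p ∈ S) : 0 < w p := by
  have : S.fold min c w ≤ w p := (fold_min_le _).2 (Or.inr ⟨p, hp, le_rfl⟩)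
  linarith [fold_max_lt_fold_min_of_gap_pos h, init_le_fold_max Sᶜ 0 w]

theorem mem_of_gap_pos (h : 0 < gap w c S) {p : P} (hp : c < w p) : p ∈ S := by
  by_contra hpS
  have : w p ≤ Sᶜ.fold max 0 w := (le_fold_max _).2 (Or.inr ⟨p, mem_compl.2 hpS, le_rfl⟩)
  linarith [fold_max_lt_fold_min_of_gap_pos h, fold_min_le_init S c w]

theorem gap_eq_zero (hc : c ≤ 0) : gap w c S = 0 :=
  le_antisymm (not_lt.1 fun h => (pos_of_gap_pos h).not_ge hc) gap_nonneg

theorem levelMass_pos (h : ∃ p, 0 < w p) : 0 < levelMass w c := by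
  have hsum₁ : 0 ≤ ∑ p, max 0 (w p - c) := sum_nonneg fun _ _ => le_max_left _ _
  have hsum₂ : 0 ≤ ∑ S, gap w c S := sum_nonneg fun _ _ => gap_nonneg
  by_cases hcut : ∃ p, c < w p
  · obtain ⟨p, hp⟩ := hcut
    have : 0 < max 0 (w p - c) := lt_max_of_lt_right (by linarith)
    have := single_le_sum (fun p _ => le_max_left 0 (w p - c)) (mem_univ p)
    unfold levelMass; linarith
  -- otherwise the top level set of `w` has a positive gap
  simp only [not_exists, not_lt] at hcut
  obtain ⟨p₀, hp₀⟩ := h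
  obtain ⟨p, -, hp⟩ := exists_max_image univ w ⟨p₀, mem_univ _⟩
  set S := univ.filter fun q => w q = w p
  have hgap : 0 < gap w c S := by
    refine lt_max_of_lt_right (sub_pos.2 ((fold_max_lt _).2 ⟨?_, fun q hq => ?_⟩ |>.trans_le
      ((le_fold_min _).2 ⟨hcut p, fun q hq => (mem_filter.1 hq).2.ge⟩)))
    · exact hp₀.trans_le (hp p₀ (mem_univ _))
    · exact lt_of_le_of_ne (hp q (mem_univ _)) fun he =>
        mem_compl.1 hq (mem_filter.2 ⟨mem_univ _, he⟩)
  have := single_le_sum (fun S _ => (gap_nonneg : 0 ≤ gap w c S)) (mem_univ S)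
  unfold levelMass; linarith

theorem levelMix_mem_stdSimplex [Fintype V] (h : 0 < levelMass w c) :
    levelMix vf uf w c ∈ stdSimplex ℝ V := by
  refine ⟨fun y => ?_, ?_⟩
  · simp only [levelMix, Pi.smul_apply, Pi.add_apply, Finset.sum_apply, smul_eq_mul]
    refine mul_nonneg (inv_nonneg.2 h.le) (add_nonneg (sum_nonneg fun p _ => ?_)
      (sum_nonneg fun S _ => ?_))
    · exact mul_nonneg (le_max_left _ _) (by simp [Pi.single_apply]; split_ifs <;> norm_num)
    · exact mul_nonneg gap_nonneg (by simp [Pi.single_apply]; split_ifs <;> norm_num)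
  · simp only [levelMix, Pi.smul_apply, Pi.add_apply, Finset.sum_apply, smul_eq_mul,
      ← mul_sum, sum_add_distrib]
    rw [sum_comm, sum_comm (s := univ) (t := univ) (f := fun y S => gap w c S * _)]
    simpa [← mul_sum, levelMass] using inv_mul_cancel₀ h.ne'

theorem support_levelMix_subset :
    support (levelMix vf uf w c) ⊆ vf '' {p | c < w p} ∪ uf '' {S | 0 < gap w c S} := by
  intro y hy
  by_contra hy'
  simp only [Set.mem_union, Set.mem_image, not_or, not_exists, not_and] at hy'
  refine hy ?_
  simp only [levelMix, Pi.smul_apply, Pi.add_apply, Finset.sum_apply, smul_eq_mul]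
  rw [sum_eq_zero fun p _ => ?_, sum_eq_zero fun S _ => ?_, add_zero, mul_zero]
  · by_cases hS : 0 < gap w c S
    · simp [Ne.symm (hy'.2 S hS)]
    · simp [le_antisymm (not_lt.1 hS) gap_nonneg]
  · by_cases hp : c < w p
    · simp [Ne.symm (hy'.1 p hp)]
    · simp [max_eq_left (sub_nonpos.2 (not_lt.1 hp))]

theorem support_levelMix_zero_subset : support (levelMix vf uf w 0) ⊆ vf '' {p | 0 < w p} := by
  refine support_levelMix_subset.trans (Set.union_subset le_rfl ?_)
  rintro _ ⟨S, hS, rfl⟩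
  exact absurd (gap_eq_zero le_rfl) hS.ne'

theorem continuous_levelMix {X : Type*} [TopologicalSpace X] {w : X → P → ℝ} {c : X → ℝ}
    (hw : Continuous w) (hc : Continuous c) (h : ∀ x, 0 < levelMass (w x) (c x)) :
    Continuous fun x => levelMix vf uf (w x) (c x) := by
  have hwp : ∀ p, Continuous fun x => w x p := fun p => (continuous_apply p).comp hw
  have hgap : ∀ S, Continuous fun x => gap (w x) (c x) S := fun S =>
    continuous_const.max ((continuous_finset_fold continuous_min S hc fun p _ => hwp p).sub
      (continuous_finset_fold continuous_max Sᶜ continuous_const fun p _ => hwp p))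
  have hmax : ∀ p, Continuous fun x => max 0 (w x p - c x) := fun p =>
    continuous_const.max ((hwp p).sub hc)
  have hmass : Continuous fun x => levelMass (w x) (c x) :=
    (continuous_finsetSum _ fun p _ => hmax p).add (continuous_finsetSum _ fun S _ => hgap S)
  exact (hmass.inv₀ fun x => (h x).ne').smul ((continuous_finsetSum _ fun p _ =>
    (hmax p).smul continuous_const).add (continuous_finsetSum _ fun S _ =>
    (hgap S).smul continuous_const))

theorem levelMix_mem_flagRealization [Fintype V] {Δ : Finset V} (hΔ : G.IsClique (Δ : Set V))
    (hv : G.IsClique (vf '' {p | 0 < w p}))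
    (hu : ∀ S : Finset P, (∀ p ∈ S, 0 < w p) →
      uf S ∈ Δ ∧ ∀ p ∈ S, G.Adj (vf p) (uf S) ∨ vf p = uf S)
    (hw : ∃ p, 0 < w p) (hc : 0 ≤ c) : levelMix vf uf w c ∈ flagRealization G := by
  refine mem_flagRealization_iff.2 ⟨levelMix_mem_stdSimplex (levelMass_pos hw), ?_⟩
  refine SimpleGraph.IsClique.subset support_levelMix_subset ?_
  refine Set.pairwise_union.2 ⟨hv.subset (Set.image_mono fun p hp => hc.trans_lt hp),
    hΔ.subset ?_, ?_⟩
  · rintro _ ⟨S, hS, rfl⟩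
    exact (hu S fun p hp => pos_of_mem_of_gap_pos hS hp).1
  · rintro _ ⟨p, hp, rfl⟩ _ ⟨S, hS, rfl⟩ hne
    have := ((hu S fun p hp => pos_of_mem_of_gap_pos hS hp).2 p
      (mem_of_gap_pos hS hp)).resolve_right hne
    exact ⟨this, this.symm⟩

end LevelMix

section Cube

variable {ι : Type*} [Fintype ι] {N : ℕ}

theorem isClosed_cube_boundary : IsClosed (Cube.boundary ι) := by
  have : Cube.boundary ι = ⋃ j, ({z | z j = 0} ∪ {z | z j = 1}) := by
    ext z; simp [Cube.boundary]
  rw [this]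
  exact isClosed_iUnion_of_finite fun j =>
    (isClosed_eq (continuous_apply j) continuous_const).union
      (isClosed_eq (continuous_apply j) continuous_const)

/-- `N` times the sup-distance from `z` to the boundary of the cube. -/
noncomputable def depth (N : ℕ) (z : ι → I) : ℝ :=
  N * (1 / 2 - dist (fun j => (z j : ℝ)) fun _ => 1 / 2)

theorem continuous_depth (N : ℕ) : Continuous (depth N : (ι → I) → ℝ) := by
  unfold depth; fun_prop

theorem depth_nonpos_of_mem_boundary (N : ℕ) {z : ι → I} (hz : z ∈ Cube.boundary ι) :
    depth N z ≤ 0 := by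
  obtain ⟨j, hj⟩ := hz
  have hj' : dist (z j : ℝ) (1 / 2) = 1 / 2 := by
    rcases hj with h | h <;> norm_num [h, Real.dist_eq]
  have := dist_le_pi_dist (fun j => (z j : ℝ)) (fun _ => (1 / 2 : ℝ)) j
  exact mul_nonpos_of_nonneg_of_nonpos (Nat.cast_nonneg N) (by linarith)

theorem abs_depth_sub_depth_le (N : ℕ) (z z' : ι → I) :
    |depth N z - depth N z'| ≤ N * dist z z' := by
  have hcoe : dist (fun j => (z j : ℝ)) (fun j => (z' j : ℝ)) ≤ dist z z' :=
    (dist_pi_le_iff dist_nonneg).2 fun j => (Subtype.dist_eq (z j) (z' j)).symm.le.trans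
      (dist_le_pi_dist z z' j)
  have := abs_dist_sub_le (fun j => (z j : ℝ)) (fun j => (z' j : ℝ)) fun _ => (1 / 2 : ℝ)
  rw [depth, depth, ← mul_sub, sub_sub_sub_cancel_left, abs_mul, Nat.abs_cast, abs_sub_comm]
  gcongr
  exact this.trans hcoe

theorem exists_mem_boundary_dist_lt {a : ℝ} (ha : 2 * a ≤ N) {z : ι → I}
    (hz : depth N z < a) : ∃ z' ∈ Cube.boundary ι, dist z z' < a / N := by
  have hN : (0 : ℝ) < N := by
    by_contra! h
    have : (N : ℝ) = 0 := le_antisymm h (Nat.cast_nonneg N)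
    simp [depth, this] at hz; linarith
  have hdist : 1 / 2 - a / N < dist (fun j => (z j : ℝ)) fun _ => 1 / 2 := by
    have : 1 / 2 - dist (fun j => (z j : ℝ)) (fun _ => 1 / 2) < a / N :=
      (lt_div_iff₀ hN).2 (by rw [depth] at hz; linarith)
    linarith
  obtain ⟨j, hj⟩ : ∃ j, 1 / 2 - a / N < |(z j : ℝ) - 1 / 2| := by
    by_contra! h
    refine hdist.not_ge ((dist_pi_le_iff ?_).2 fun j => (Real.dist_eq _ _).trans_le (h j))
    rw [sub_nonneg, div_le_iff₀ hN]; linarith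
  have hupd : ∀ t : I, |(z j : ℝ) - t| < a / N → dist z (update z j t) < a / N := by
    intro t ht
    refine (dist_pi_lt_iff (by linarith [abs_nonneg ((z j : ℝ) - t)])).2 fun l => ?_
    rcases eq_or_ne l j with rfl | hl
    · simpa [Subtype.dist_eq, Real.dist_eq] using ht
    · simpa [hl] using (abs_nonneg ((z j : ℝ) - t)).trans_lt ht
  rcases le_or_gt (1 / 2) (z j : ℝ) with h | h
  · refine ⟨update z j 1, ⟨j, Or.inr (by simp)⟩, hupd 1 ?_⟩
    rw [abs_of_nonneg (by linarith)] at hj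
    rw [abs_sub_comm, abs_of_nonneg (by simpa using (z j).2.2)]
    simp only [Set.Icc.coe_one]; linarith
  · refine ⟨update z j 0, ⟨j, Or.inl (by simp)⟩, hupd 0 ?_⟩
    rw [abs_of_neg (by linarith)] at hj
    rw [Set.Icc.coe_zero, sub_zero, abs_of_nonneg (z j).2.1]
    linarith

noncomputable def gridPoint (q : ι → Fin (N + 1)) : ι → I := fun j =>
  ⟨(q j : ℕ) / N, div_nonneg (Nat.cast_nonneg _) (Nat.cast_nonneg _),
    div_le_one_of_le₀ (by exact_mod_cast Nat.lt_succ_iff.1 (q j).2) (Nat.cast_nonneg _)⟩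

noncomputable def gridHat (N : ℕ) (z : ι → I) (q : ι → Fin (N + 1)) : ℝ :=
  kuhnHat fun j => N * (z j : ℝ) - (q j : ℕ)

theorem continuous_gridHat : Continuous (gridHat N : (ι → I) → (ι → Fin (N + 1)) → ℝ) :=
  continuous_pi fun _ => continuous_kuhnHat.comp (by fun_prop)

theorem dist_gridPoint_lt (hN : 0 < N) {z : ι → I} {q : ι → Fin (N + 1)}
    (h : 0 < gridHat N z q) : dist z (gridPoint q) < 1 / N := by
  have hN' : (0 : ℝ) < N := by exact_mod_cast hN
  refine (dist_pi_lt_iff (by positivity)).2 fun j => ?_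
  have hwin := abs_lt_one_of_kuhnHat_pos h j
  rw [Subtype.dist_eq, Real.dist_eq]
  show |(z j : ℝ) - (q j : ℕ) / N| < 1 / N
  rw [← mul_lt_mul_iff_of_pos_left hN', ← abs_of_pos hN', ← abs_mul, abs_of_pos hN', mul_sub,
    mul_div_cancel₀ _ hN'.ne', mul_one_div_cancel hN'.ne']
  exact hwin

theorem abs_depth_sub_depth_gridPoint_lt (hN : 0 < N) {z : ι → I} {q : ι → Fin (N + 1)}
    (h : 0 < gridHat N z q) : |depth N z - depth N (gridPoint q)| < 1 := by
  have hN' : (0 : ℝ) < N := by exact_mod_cast hN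
  refine (abs_depth_sub_depth_le N z (gridPoint q)).trans_lt ?_
  rw [← lt_div_iff₀' hN']
  exact dist_gridPoint_lt hN h

theorem exists_gridHat_pos (N : ℕ) (z : ι → I) : ∃ q : ι → Fin (N + 1), 0 < gridHat N z q :=
  exists_kuhnHat_pos fun j => ⟨mul_nonneg (Nat.cast_nonneg N) (z j).2.1,
    mul_le_of_le_one_right (Nat.cast_nonneg N) (z j).2.2⟩

theorem card_le_of_forall_gridHat_pos {z : ι → I} {S : Finset (ι → Fin (N + 1))}
    (hS : ∀ q ∈ S, 0 < gridHat N z q) : S.card ≤ Fintype.card ι + 1 :=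
  (card_le_card fun q hq => mem_filter.2 ⟨mem_univ q, hS q hq⟩).trans
    (card_filter_kuhnHat_pos_le N _)

noncomputable def blendWeight (N : ℕ) (z : ι → I) : ℝ := max 0 (min 1 (depth N z))

noncomputable def coneWeight (N : ℕ) (z : ι → I) : ℝ := max 0 (min 1 (depth N z - 2))

theorem continuous_blendWeight : Continuous (blendWeight N : (ι → I) → ℝ) := by
  unfold blendWeight; have := continuous_depth (ι := ι) N; fun_prop

theorem continuous_coneWeight : Continuous (coneWeight N : (ι → I) → ℝ) := by
  unfold coneWeight; have := continuous_depth (ι := ι) N; fun_prop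

theorem blendWeight_mem (z : ι → I) : blendWeight N z ∈ Set.Icc (0 : ℝ) 1 :=
  ⟨le_max_left _ _, max_le zero_le_one (min_le_left _ _)⟩

theorem coneWeight_mem (z : ι → I) : coneWeight N z ∈ Set.Icc (0 : ℝ) 1 :=
  ⟨le_max_left _ _, max_le zero_le_one (min_le_left _ _)⟩

theorem blendWeight_eq_zero {z : ι → I} (h : depth N z ≤ 0) : blendWeight N z = 0 :=
  max_eq_left (min_le_of_right_le h)

theorem depth_lt_one_of_blendWeight_ne_one {z : ι → I} (h : blendWeight N z ≠ 1) :
    depth N z < 1 := by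
  by_contra! h'
  exact h (by simp [blendWeight, min_eq_left h'])

theorem coneWeight_eq_zero {z : ι → I} (h : depth N z < 1) : coneWeight N z = 0 :=
  max_eq_left (min_le_of_right_le (by linarith))

theorem depth_lt_three_of_coneWeight_ne_one {z : ι → I} (h : coneWeight N z ≠ 1) :
    depth N z < 3 := by
  by_contra! h'
  exact h (by simp [coneWeight, min_eq_left (by linarith : (1 : ℝ) ≤ depth N z - 2)])

theorem blendWeight_eq_one_of_coneWeight_ne_zero {z : ι → I} (h : coneWeight N z ≠ 0) :
    blendWeight N z = 1 := by
  by_contra h'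
  exact h (coneWeight_eq_zero (depth_lt_one_of_blendWeight_ne_one h'))

end Cube

section Approximation

variable {V : Type*} {G : SimpleGraph V} {ι : Type*} [Fintype ι] {N : ℕ}

/-- Equal to `x` on the boundary of the cube; slides from `x` to the vertex `v₀` in a collar of
width `1 / N`, and from `v₀` to `u₀` further inside. -/
noncomputable def canonicalMap (x : V → ℝ) (v₀ u₀ : V) (N : ℕ) (z : ι → I) : V → ℝ :=
  lineMap x (lineMap (Pi.single v₀ 1 : V → ℝ) (Pi.single u₀ 1) (coneWeight N z)) (blendWeight N z)

theorem continuous_canonicalMap (x : V → ℝ) (v₀ u₀ : V) :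
    Continuous (canonicalMap x v₀ u₀ N : (ι → I) → V → ℝ) := by
  have := continuous_blendWeight (ι := ι) (N := N)
  have := continuous_coneWeight (ι := ι) (N := N)
  unfold canonicalMap; simp only [lineMap_apply_module]; fun_prop

theorem canonicalMap_of_mem_boundary {x : V → ℝ} {v₀ u₀ : V} {z : ι → I}
    (hz : z ∈ Cube.boundary ι) : canonicalMap x v₀ u₀ N z = x := by
  rw [canonicalMap, blendWeight_eq_zero (depth_nonpos_of_mem_boundary N hz), lineMap_apply_zero]

structure IsGroundLabelling {P : Type*} (G : SimpleGraph V) (Δ : Finset V) (m : ℕ) (vf : P → V)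
    (v₀ u₀ : V) (uf : Finset P → V) : Prop where
  mem : ∀ S : Finset P, S.card ≤ m → uf S ∈ Δ
  adj_or_eq : ∀ S : Finset P, S.card ≤ m → ∀ p ∈ S, G.Adj (vf p) (uf S) ∨ vf p = uf S
  eq_of_forall_eq : ∀ S : Finset P, (∀ p ∈ S, vf p = v₀) → uf S = u₀

theorem exists_isGroundLabelling {P : Type*} {Δ : Finset V} {m k : ℕ}
    (hground : ∀ v : V, (Δ.filter (fun u => ¬ (G.Adj v u ∨ v = u))).card ≤ k)
    (hΔcard : m * k < Δ.card) (vf : P → V) {v₀ u₀ : V} (hu₀ : u₀ ∈ Δ)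
    (hadj : G.Adj v₀ u₀ ∨ v₀ = u₀) : ∃ uf, IsGroundLabelling G Δ m vf v₀ u₀ uf := by
  have : ∀ S : Finset P, ∃ u, (S.card ≤ m → u ∈ Δ ∧ ∀ p ∈ S, G.Adj (vf p) u ∨ vf p = u) ∧
      ((∀ p ∈ S, vf p = v₀) → u = u₀) := by
    intro S
    by_cases hS : ∀ p ∈ S, vf p = v₀
    · exact ⟨u₀, fun _ => ⟨hu₀, fun p hp => hS p hp ▸ hadj⟩, fun _ => rfl⟩
    by_cases hSm : S.card ≤ m
    · obtain ⟨u, hu, hSu⟩ := exists_mem_forall_adj_or_eq (B := S.image vf) hground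
        ((Nat.mul_le_mul_right k (card_image_le.trans hSm)).trans_lt hΔcard)
      exact ⟨u, fun _ => ⟨hu, fun p hp => hSu _ (mem_image_of_mem vf hp)⟩, fun h => absurd h hS⟩
    · exact ⟨u₀, fun h => absurd h hSm, fun h => absurd h hS⟩
  choose uf huf using this
  exact ⟨uf, ⟨fun S hS => ((huf S).1 hS).1, fun S hS => ((huf S).1 hS).2, fun S => (huf S).2⟩⟩

noncomputable def cutMap (x : V → ℝ) (vf : (ι → Fin (N + 1)) → V)
    (uf : Finset (ι → Fin (N + 1)) → V) (z : ι → I) (c : ℝ) : V → ℝ :=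
  lineMap x (levelMix vf uf (gridHat N z) c) (blendWeight N z)

variable {x : V → ℝ} {v₀ u₀ : V} {vf : (ι → Fin (N + 1)) → V}
  {uf : Finset (ι → Fin (N + 1)) → V} {Δ : Finset V} {m : ℕ}

theorem continuous_cutMap {Y : Type*} [TopologicalSpace Y] {z : Y → ι → I} {c : Y → ℝ}
    (hz : Continuous z) (hc : Continuous c) : Continuous fun y => cutMap x vf uf (z y) (c y) := by
  have hβ := (continuous_blendWeight (N := N)).comp hz
  have hK := continuous_levelMix (vf := vf) (uf := uf) (continuous_gridHat.comp hz) hc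
    fun y => levelMass_pos (exists_gridHat_pos N (z y))
  simp only [cutMap, lineMap_apply_module]
  exact ((continuous_const.sub hβ).smul continuous_const).add (hβ.smul hK)

theorem cutMap_of_mem_boundary {z : ι → I} (hz : z ∈ Cube.boundary ι) (c : ℝ) :
    cutMap x vf uf z c = x := by
  rw [cutMap, blendWeight_eq_zero (depth_nonpos_of_mem_boundary N hz), lineMap_apply_zero]

theorem support_levelMix_gridHat_subset_ground (huf : IsGroundLabelling G Δ m vf v₀ u₀ uf)
    (hm : Fintype.card ι + 1 ≤ m) {z : ι → I} {c : ℝ} (hc : 1 ≤ c) :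
    support (levelMix vf uf (gridHat N z) c) ⊆ Δ := by
  refine support_levelMix_subset.trans (Set.union_subset ?_ ?_)
  · rintro _ ⟨q, hq, rfl⟩
    exact absurd (hc.trans_lt hq) (kuhnHat_le_one _).not_gt
  · rintro _ ⟨S, hS, rfl⟩
    exact huf.mem S ((card_le_of_forall_gridHat_pos fun q hq =>
      pos_of_mem_of_gap_pos hS hq).trans hm)

variable [Fintype V]

theorem canonicalMap_mem (hx : x ∈ flagRealization G) (hv₀ : x v₀ ≠ 0)
    (hu₀ : G.Adj v₀ u₀ ∨ v₀ = u₀) (z : ι → I) :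
    canonicalMap x v₀ u₀ N z ∈ flagRealization G := by
  unfold canonicalMap
  by_cases hγ : coneWeight N z = 0
  · rw [hγ, lineMap_apply_zero]
    refine lineMap_mem_flagRealization hx (single_mem_flagRealization v₀) ?_ (blendWeight_mem z)
    rw [Set.union_eq_left.2 (Pi.support_single_subset.trans (Set.singleton_subset_iff.2 hv₀))]
    exact (mem_flagRealization_iff.1 hx).2
  · rw [blendWeight_eq_one_of_coneWeight_ne_zero hγ, lineMap_apply_one]
    exact lineMap_mem_flagRealization (single_mem_flagRealization v₀)
      (single_mem_flagRealization u₀) ((isClique_pair_of_adj_or_eq hu₀).subset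
        (Set.union_subset_union Pi.support_single_subset Pi.support_single_subset))
      (coneWeight_mem z)

noncomputable def canonicalLoop (hx : x ∈ flagRealization G) (hv₀ : x v₀ ≠ 0)
    (hu₀ : G.Adj v₀ u₀ ∨ v₀ = u₀) (N : ℕ) : C(ι → I, flagRealization G) :=
  ⟨fun z => ⟨canonicalMap x v₀ u₀ N z, canonicalMap_mem hx hv₀ hu₀ z⟩,
    (continuous_canonicalMap x v₀ u₀).subtype_mk _⟩

/-- Vertex labels of the grid points which approximate `f` simplicially and equal `v₀` near the
boundary, where `f` is close to `x`. -/
structure IsApproxLabelling (f : C(ι → I, flagRealization G)) (x : V → ℝ) (v₀ : V)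
    (vf : (ι → Fin (N + 1)) → V) : Prop where
  apply_ne_zero : ∀ z q, 0 < gridHat N z q → (f z : V → ℝ) (vf q) ≠ 0
  eq_of_depth_le : ∀ q, depth N (gridPoint q) ≤ 4 → vf q = v₀
  support_subset : ∀ z, depth N z < 1 → support x ⊆ support (f z : V → ℝ)

theorem eventually_exists_isApproxLabelling (f : C(ι → I, flagRealization G))
    (hf : ∀ z ∈ Cube.boundary ι, (f z : V → ℝ) = x) (hv₀ : x v₀ ≠ 0) :
    ∀ᶠ N in atTop, ∃ vf : (ι → Fin (N + 1)) → V, IsApproxLabelling f x v₀ vf := by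
  have hfv : ∀ v, Continuous fun z => (f z : V → ℝ) v := fun v =>
    (continuous_apply v).comp (continuous_subtype_val.comp f.continuous)
  have hopen : IsOpen {z | support x ⊆ support (f z : V → ℝ)} := by
    simp only [Set.subset_def, mem_support, Set.ofPred_forall]
    refine isOpen_iInter_of_finite fun v => ?_
    by_cases hv : x v = 0
    · simp [hv]
    · simpa [hv] using isOpen_ne_fun (hfv v) continuous_const
  obtain ⟨δ₁, hδ₁, hthick⟩ := isClosed_cube_boundary.isCompact.exists_thickening_subset_open
    hopen fun z hz => by simp [hf z hz]
  obtain ⟨δ₂, hδ₂, hleb⟩ :=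
    lebesgue_number_lemma_of_metric (c := fun v => {z | (f z : V → ℝ) v ≠ 0}) isCompact_univ (fun v => isOpen_ne_fun (hfv v) continuous_const)
    fun z _ => Set.mem_iUnion.2 (support_nonempty_of_mem_flagRealization (f z).2)
  choose sel hsel using fun z => hleb z (Set.mem_univ z)
  have hnear : ∀ N : ℕ, 10 ≤ N → 5 / δ₁ ≤ N → ∀ z, depth N z < 5 →
      support x ⊆ support (f z : V → ℝ) := fun N hN hNδ z hz => by
    obtain ⟨z', hz', hdist⟩ := exists_mem_boundary_dist_lt (by norm_num; exact_mod_cast hN) hz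
    exact hthick (Metric.mem_thickening_iff.2 ⟨z', hz', hdist.trans_le (by
      rw [div_le_iff₀ (by positivity)]; rwa [div_le_iff₀ hδ₁, mul_comm] at hNδ)⟩)
  filter_upwards [eventually_ge_atTop 10, tendsto_natCast_atTop_atTop.eventually_ge_atTop (5 / δ₁),
    tendsto_natCast_atTop_atTop.eventually_ge_atTop (1 / δ₂)] with N hN₁₀ hNδ₁ hNδ₂
  have hN : 0 < N := by omega
  refine ⟨fun q => if depth N (gridPoint q) ≤ 4 then v₀ else sel (gridPoint q),
    ⟨fun z q hq => ?_, fun q hq => if_pos hq, fun z hz => hnear N hN₁₀ hNδ₁ z (by linarith)⟩⟩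
  split_ifs with hq₄
  · exact hnear N hN₁₀ hNδ₁ z (by linarith [(abs_lt.1 (abs_depth_sub_depth_gridPoint_lt hN hq)).2])
      (mem_support.2 hv₀)
  · refine hsel (gridPoint q) (Metric.mem_ball.2 ((dist_gridPoint_lt hN hq).trans_le ?_))
    rw [div_le_iff₀ (by exact_mod_cast hN)]; rwa [div_le_iff₀ hδ₂, mul_comm] at hNδ₂

variable {f : C(ι → I, flagRealization G)}

theorem IsApproxLabelling.eq_of_depth_lt (hvf : IsApproxLabelling f x v₀ vf) (hN : 0 < N)
    {z : ι → I} (hz : depth N z < 3) {q : ι → Fin (N + 1)} (hq : 0 < gridHat N z q) :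
    vf q = v₀ := by
  refine hvf.eq_of_depth_le q ?_
  linarith [(abs_lt.1 (abs_depth_sub_depth_gridPoint_lt hN hq)).1]

theorem levelMix_gridHat_mem (hΔ : G.IsClique (Δ : Set V)) (hvf : IsApproxLabelling f x v₀ vf)
    (huf : IsGroundLabelling G Δ m vf v₀ u₀ uf) (hm : Fintype.card ι + 1 ≤ m) (z : ι → I)
    {c : ℝ} (hc : 0 ≤ c) : levelMix vf uf (gridHat N z) c ∈ flagRealization G := by
  refine levelMix_mem_flagRealization hΔ ?_ (fun S hS => ?_) (exists_gridHat_pos N z) hc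
  · refine (mem_flagRealization_iff.1 (f z).2).2.subset ?_
    rintro _ ⟨q, hq, rfl⟩
    exact hvf.apply_ne_zero z q hq
  · have hcard := (card_le_of_forall_gridHat_pos hS).trans hm
    exact ⟨huf.mem S hcard, huf.adj_or_eq S hcard⟩

theorem support_levelMix_gridHat_zero_subset (hvf : IsApproxLabelling f x v₀ vf) (z : ι → I) :
    support (levelMix vf uf (gridHat N z) 0) ⊆ support (f z : V → ℝ) := by
  refine support_levelMix_zero_subset.trans ?_
  rintro _ ⟨q, hq, rfl⟩
  exact hvf.apply_ne_zero z q hq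

theorem support_levelMix_gridHat_subset_pair (hvf : IsApproxLabelling f x v₀ vf)
    (huf : IsGroundLabelling G Δ m vf v₀ u₀ uf) (hN : 0 < N) {z : ι → I} (hz : depth N z < 3)
    {c : ℝ} (hc : 0 ≤ c) : support (levelMix vf uf (gridHat N z) c) ⊆ {v₀, u₀} := by
  refine support_levelMix_subset.trans (Set.union_subset ?_ ?_)
  · rintro _ ⟨q, hq, rfl⟩
    exact Or.inl (hvf.eq_of_depth_lt hN hz (hc.trans_lt hq))
  · rintro _ ⟨S, hS, rfl⟩
    exact Or.inr (huf.eq_of_forall_eq S fun q hq =>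
      hvf.eq_of_depth_lt hN hz (pos_of_mem_of_gap_pos hS hq))

theorem support_cutMap_zero_subset (hvf : IsApproxLabelling f x v₀ vf) (z : ι → I) :
    support (cutMap x vf uf z 0) ⊆ support (f z : V → ℝ) := by
  have hK := support_levelMix_gridHat_zero_subset (uf := uf) hvf z
  by_cases hβ : blendWeight N z = 1
  · rwa [cutMap, hβ, lineMap_apply_one]
  · exact (support_lineMap_subset _ _ _).trans
      (Set.union_subset (hvf.support_subset z (depth_lt_one_of_blendWeight_ne_one hβ)) hK)

theorem cutMap_mem (hx : x ∈ flagRealization G) (hΔ : G.IsClique (Δ : Set V))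
    (hvf : IsApproxLabelling f x v₀ vf) (huf : IsGroundLabelling G Δ m vf v₀ u₀ uf)
    (hm : Fintype.card ι + 1 ≤ m) {z : ι → I} {c : ℝ} (hc : 0 ≤ c) (hc₀ : depth N z < 1 → c = 0) :
    cutMap x vf uf z c ∈ flagRealization G := by
  by_cases hβ : blendWeight N z = 1
  · rw [cutMap, hβ, lineMap_apply_one]
    exact levelMix_gridHat_mem hΔ hvf huf hm z hc
  · have hz := depth_lt_one_of_blendWeight_ne_one hβ
    rw [hc₀ hz]
    exact lineMap_mem_flagRealization hx (levelMix_gridHat_mem hΔ hvf huf hm z le_rfl)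
      ((mem_flagRealization_iff.1 (f z).2).2.subset (Set.union_subset
        (hvf.support_subset z hz) (support_levelMix_gridHat_zero_subset hvf z)))
      (blendWeight_mem z)

theorem isClique_support_cutMap_union_canonicalMap (hx : x ∈ flagRealization G)
    (hΔ : G.IsClique (Δ : Set V)) (hv₀ : x v₀ ≠ 0) (hu₀ : u₀ ∈ Δ) (hadj : G.Adj v₀ u₀ ∨ v₀ = u₀)
    (hN : 0 < N) (hvf : IsApproxLabelling f x v₀ vf) (huf : IsGroundLabelling G Δ m vf v₀ u₀ uf)
    (hm : Fintype.card ι + 1 ≤ m) (z : ι → I) :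
    G.IsClique (support (cutMap x vf uf z (coneWeight N z)) ∪
      support (canonicalMap x v₀ u₀ N z)) := by
  have hsingle : ∀ v : V, support (Pi.single v 1 : V → ℝ) ⊆ {v} := fun v =>
    Pi.support_single_subset
  unfold cutMap canonicalMap
  by_cases hβ : blendWeight N z = 1
  · rw [hβ, lineMap_apply_one, lineMap_apply_one]
    by_cases hγ : coneWeight N z = 1
    · rw [hγ, lineMap_apply_one]
      exact hΔ.subset (Set.union_subset (support_levelMix_gridHat_subset_ground huf hm le_rfl)
        ((hsingle u₀).trans (Set.singleton_subset_iff.2 hu₀)))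
    · refine (isClique_pair_of_adj_or_eq hadj).subset (Set.union_subset
        (support_levelMix_gridHat_subset_pair hvf huf hN
          (depth_lt_three_of_coneWeight_ne_one hγ) (coneWeight_mem z).1) ?_)
      exact (support_lineMap_subset _ _ _).trans (by
        rw [Set.insert_eq]; exact Set.union_subset_union (hsingle v₀) (hsingle u₀))
  · have hz := depth_lt_one_of_blendWeight_ne_one hβ
    have hv₀x : support (Pi.single v₀ 1 : V → ℝ) ⊆ support x :=
      (hsingle v₀).trans (Set.singleton_subset_iff.2 hv₀)
    rw [coneWeight_eq_zero hz, lineMap_apply_zero]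
    refine (mem_flagRealization_iff.1 hx).2.subset (Set.union_subset
      ((support_lineMap_subset _ _ _).trans (Set.union_subset le_rfl ?_))
      ((support_lineMap_subset _ _ _).trans (Set.union_subset le_rfl hv₀x)))
    refine support_levelMix_zero_subset.trans ?_
    rintro _ ⟨q, hq, rfl⟩
    rw [hvf.eq_of_depth_lt hN (by linarith) hq]
    exact hv₀

theorem homotopicRel_canonicalLoop (hx : x ∈ flagRealization G) (hΔ : G.IsClique (Δ : Set V))
    (hv₀ : x v₀ ≠ 0) (hu₀ : u₀ ∈ Δ) (hadj : G.Adj v₀ u₀ ∨ v₀ = u₀) (hN : 0 < N)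
    (hvf : IsApproxLabelling f x v₀ vf) (huf : IsGroundLabelling G Δ m vf v₀ u₀ uf)
    (hm : Fintype.card ι + 1 ≤ m) (hf : ∀ z ∈ Cube.boundary ι, (f z : V → ℝ) = x) :
    f.HomotopicRel (canonicalLoop hx hv₀ hadj N) (Cube.boundary ι) := by
  have hγ := continuous_coneWeight (ι := ι) (N := N)
  let F : C(I × (ι → I), flagRealization G) :=
    ⟨fun p => ⟨cutMap x vf uf p.2 (p.1 * coneWeight N p.2),
      cutMap_mem hx hΔ hvf huf hm (mul_nonneg p.1.2.1 (coneWeight_mem _).1)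
        fun hz => by rw [coneWeight_eq_zero hz, mul_zero]⟩,
      (continuous_cutMap continuous_snd (by fun_prop)).subtype_mk _⟩
  have hF₀ : ∀ z, (F.curry 0 z : V → ℝ) = cutMap x vf uf z 0 := fun z => by
    simp [F]
  have hF₁ : ∀ z, (F.curry 1 z : V → ℝ) = cutMap x vf uf z (coneWeight N z) := fun z => by
    simp [F]
  refine ((homotopicRel_of_isClique (fun z hz => Subtype.ext ?_) fun z => ?_).trans
    (homotopicRel_curry F fun t z hz => Subtype.ext ?_)).trans
    (homotopicRel_of_isClique (fun z hz => Subtype.ext ?_) fun z => ?_)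
  · rw [hF₀, cutMap_of_mem_boundary hz, hf z hz]
  · rw [hF₀, Set.union_eq_left.2 (support_cutMap_zero_subset hvf z)]
    exact (mem_flagRealization_iff.1 (f z).2).2
  · simp only [F, ContinuousMap.coe_mk, cutMap_of_mem_boundary hz]
  · rw [hF₁, cutMap_of_mem_boundary hz]
    exact (canonicalMap_of_mem_boundary hz).symm
  · rw [hF₁]
    exact isClique_support_cutMap_union_canonicalMap hx hΔ hv₀ hu₀ hadj hN hvf huf hm z

end Approximation

theorem genLoop_homotopic {V : Type*} [Fintype V] {G : SimpleGraph V} {ι : Type*} [Fintype ι]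
    {Δ : Finset V} {m k : ℕ} (hΔ : G.IsClique (Δ : Set V))
    (hground : ∀ v : V, (Δ.filter (fun u => ¬ (G.Adj v u ∨ v = u))).card ≤ k)
    (hΔcard : m * k < Δ.card) (hm : Fintype.card ι + 1 ≤ m) {x : flagRealization G}
    (f g : GenLoop ι (flagRealization G) x) : GenLoop.Homotopic f g := by
  obtain ⟨v₀, hv₀⟩ := support_nonempty_of_mem_flagRealization x.2
  obtain ⟨u₀, hu₀, hadj⟩ := exists_mem_forall_adj_or_eq (B := {v₀}) hground
    (lt_of_le_of_lt (by simpa using Nat.le_mul_of_pos_left k (by omega : 0 < m)) hΔcard)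
  have hadj₀ := hadj v₀ (mem_singleton_self v₀)
  have hbdry : ∀ h : GenLoop ι (flagRealization G) x, ∀ z ∈ Cube.boundary ι,
      (h.1 z : V → ℝ) = x := fun h z hz => congrArg Subtype.val (h.2 z hz)
  obtain ⟨N, ⟨vf, hvf⟩, ⟨vg, hvg⟩, hN⟩ :=
    ((eventually_exists_isApproxLabelling f.1 (hbdry f) hv₀).and
      ((eventually_exists_isApproxLabelling g.1 (hbdry g) hv₀).and (eventually_gt_atTop 0))).exists
  obtain ⟨uf, huf⟩ := exists_isGroundLabelling hground hΔcard vf hu₀ hadj₀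
  obtain ⟨ug, hug⟩ := exists_isGroundLabelling hground hΔcard vg hu₀ hadj₀
  exact (homotopicRel_canonicalLoop x.2 hΔ hv₀ hu₀ hadj₀ hN hvf huf hm (hbdry f)).trans
    (homotopicRel_canonicalLoop x.2 hΔ hv₀ hu₀ hadj₀ hN hvg hug hm (hbdry g)).symm

end FlagComplex

theorem stmt_2_general {V : Type*} [Fintype V] (G : SimpleGraph V) (m k : ℕ)
    (hm : 1 ≤ m)
    (Δ : Finset V) (hclique : G.IsClique ↑Δ) (hcard : Δ.card = m * k + 1)
    (hground : ∀ v : V, (Δ.filter (fun u => ¬ (G.Adj v u ∨ v = u))).card ≤ k) :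
    IsNConnectedSpace (m - 1) (flagRealization G) := by
  obtain ⟨d, -⟩ : Δ.Nonempty := Finset.card_pos.1 (by omega)
  refine ⟨⟨⟨_, FlagComplex.single_mem_flagRealization d⟩⟩, fun i hi x => ⟨fun a b => ?_⟩⟩
  refine Quotient.inductionOn₂ a b fun f g => Quotient.sound ?_
  exact FlagComplex.genLoop_homotopic (m := m) hclique hground (by omega) (by simp; omega) f g

/-- For all `m, k ≥ 1`, every finite `(mk, k)`-grounded flag complex
is `(m−1)`-connected.  Here an `(mk)`-simplex `Δ` (a clique with `mk+1` vertices) is a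
`k`-ground: every vertex is adjacent (or equal) to all but at most `k` vertices of `Δ`. -/
theorem stmt_2 {V : Type*} [Fintype V] (G : SimpleGraph V) (m k : ℕ)
    (hm : 1 ≤ m) (hk : 1 ≤ k)
    (Δ : Finset V) (hclique : G.IsClique ↑Δ) (hcard : Δ.card = m * k + 1)
    (hground : ∀ v : V, (Δ.filter (fun u => ¬ (G.Adj v u ∨ v = u))).card ≤ k) :
    IsNConnectedSpace (m - 1) (flagRealization G) :=
  stmt_2_general G m k hm Δ hclique hcard hground
end

section
/- The automorphism group of a finite tree in which every vertex has degree at most 4 is a solvable group whose order is of the form 2^j·3^k. -/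
/-!
Let `S` be the set of vertices of degree at least two, i.e. the tree with its leaves removed.
Automorphisms preserve degrees, so restriction is a homomorphism `Aut T → Aut T[S]`, and `T[S]`
is a smaller tree. An automorphism fixing `S` pointwise is determined by the permutations it
induces on the neighbourhoods of the vertices of `S`, because every leaf hangs off a vertex
of `S`; hence the kernel embeds into `∏ v ∈ S, Sym (N v)`, a product of subgroups of `S₄`.
Since `S₄` is solvable of order `24`, induction on the number of vertices shows that `Aut T` is
solvable and that its order divides a power of `24 = 2³ · 3`.
-/

/-- The automorphism group of a simple graph `T`, as a subgroup of the permutation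
group of its vertex set. -/
def graphAut {V : Type*} (T : SimpleGraph V) : Subgroup (Equiv.Perm V) where
  carrier := {e | ∀ u v, T.Adj (e u) (e v) ↔ T.Adj u v}
  one_mem' := by intro u v; simp
  mul_mem' := by
    intro a b ha hb u v
    simp only [Equiv.Perm.mul_apply]
    rw [ha, hb]
  inv_mem' := by
    intro a ha u v
    have := ha (a⁻¹ u) (a⁻¹ v)
    simpa using this.symm

open Equiv

theorem alternatingGroup.isSolvable_fin_four : Group.IsSolvable (alternatingGroup (Fin 4)) := by
  have hcard : Nat.card (Fin 4) = 4 := Nat.card_eq_fintype_card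
  let K := alternatingGroup.kleinFour (Fin 4)
  have := alternatingGroup.normal_kleinFour hcard
  have := alternatingGroup.kleinFour_isKleinFour hcard
  have : IsMulCommutative K := IsKleinFour.isMulCommutative
  have hquot : Nat.card (alternatingGroup (Fin 4) ⧸ K) = 3 := by
    have := K.card_eq_card_quotient_mul_card_subgroup
    rw [alternatingGroup.card_of_card_eq_four hcard,
      alternatingGroup.kleinFour_card_of_card_eq_four hcard] at this
    omega
  have : Fact (Nat.Prime 3) := ⟨Nat.prime_three⟩
  have := isCyclic_of_prime_card hquot
  have : Group.IsSolvable K := Group.isSolvable_of_comm mul_comm'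
  have : Group.IsSolvable (alternatingGroup (Fin 4) ⧸ K) := Group.isSolvable_of_comm mul_comm'
  exact Group.isSolvable_of_ker_le_range K.subtype (QuotientGroup.mk' K) (by simp)

theorem Equiv.Perm.isSolvable_fin_four : Group.IsSolvable (Perm (Fin 4)) :=
  have := alternatingGroup.isSolvable_fin_four
  Group.isSolvable_of_ker_le_range (alternatingGroup (Fin 4)).subtype sign
    (by rw [Subgroup.range_subtype]; rfl)

theorem Equiv.Perm.isSolvable_of_card_le_four {X : Type*} [Fintype X] (h : Fintype.card X ≤ 4) :
    Group.IsSolvable (Perm X) := by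
  obtain ⟨f⟩ := Function.Embedding.nonempty_of_card_le (h.trans_eq (Fintype.card_fin 4).symm)
  have := Equiv.Perm.isSolvable_fin_four
  exact Group.isSolvable_of_isSolvable_injective (Perm.viaEmbeddingHom_injective f)

theorem Equiv.Perm.card_dvd_24_of_card_le_four {X : Type*} [Fintype X] (h : Fintype.card X ≤ 4) :
    Nat.card (Perm X) ∣ 24 := by
  rw [Nat.card_perm, Nat.card_eq_fintype_card]
  exact Nat.factorial_dvd_factorial h

instance Group.isSolvable_pi {ι : Type*} [Finite ι] {G : ι → Type*} [∀ i, Group (G i)]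
    [∀ i, Group.IsSolvable (G i)] : Group.IsSolvable (∀ i, G i) := by
  choose N hN using fun i => (‹∀ i, Group.IsSolvable (G i)› i).solvable
  obtain ⟨n, hn⟩ := Finite.exists_le N
  refine ⟨n, eq_bot_iff.2 fun x hx => Subgroup.mem_bot.2 (funext fun i => ?_)⟩
  have := map_derivedSeries_le_derivedSeries (Pi.evalMonoidHom G i) n ⟨x, hx, rfl⟩
  rw [Pi.one_apply, ← Subgroup.mem_bot, ← hN i]
  exact derivedSeries_antitone _ (hn i) this

theorem Group.isSolvable_of_ker_injective {G H K : Type*} [Group G] [Group H] [Group K]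
    (ψ : G →* H) {Φ : ψ.ker →* K} (hΦ : Function.Injective Φ) [Group.IsSolvable H]
    [Group.IsSolvable K] : Group.IsSolvable G :=
  have := Group.isSolvable_of_isSolvable_injective hΦ
  Group.isSolvable_of_ker_le_range ψ.ker.subtype ψ (by simp)

theorem MonoidHom.card_dvd_mul_of_ker_injective {G H K : Type*} [Group G] [Group H] [Group K]
    (ψ : G →* H) {Φ : ψ.ker →* K} (hΦ : Function.Injective Φ) :
    Nat.card G ∣ Nat.card H * Nat.card K := by
  rw [ψ.ker.card_eq_card_quotient_mul_card_subgroup,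
    Nat.card_congr (QuotientGroup.quotientKerEquivRange ψ).toEquiv]
  exact mul_dvd_mul ψ.range.card_subgroup_dvd_card (Subgroup.card_dvd_of_injective Φ hΦ)

theorem Equiv.Perm.card_pi_dvd_24_pow {ι : Type*} [Fintype ι] {X : ι → Type*}
    [∀ i, Fintype (X i)] (h : ∀ i, Fintype.card (X i) ≤ 4) :
    Nat.card (∀ i, Perm (X i)) ∣ 24 ^ Fintype.card ι := by
  rw [Nat.card_pi, ← Finset.card_univ, ← Finset.prod_const]
  exact Finset.prod_dvd_prod_of_dvd _ _ fun i _ => card_dvd_24_of_card_le_four (h i)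

theorem Nat.exists_eq_two_pow_mul_three_pow_of_dvd_24_pow {n m : ℕ} (h : n ∣ 24 ^ m) :
    ∃ j k : ℕ, n = 2 ^ j * 3 ^ k := by
  rw [show 24 ^ m = 2 ^ (3 * m) * 3 ^ m by rw [pow_mul, ← mul_pow]; norm_num] at h
  obtain ⟨a, b, ha, hb, rfl⟩ := Nat.dvd_mul.1 h
  obtain ⟨j, -, rfl⟩ := (Nat.dvd_prime_pow Nat.prime_two).1 ha
  obtain ⟨k, -, rfl⟩ := (Nat.dvd_prime_pow Nat.prime_three).1 hb
  exact ⟨j, k, rfl⟩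

namespace SimpleGraph

variable {V : Type*}

section Restriction

variable {T : SimpleGraph V}

def innerVertices (T : SimpleGraph V) [T.LocallyFinite] : Set V := {v | 2 ≤ T.degree v}

instance [T.LocallyFinite] : DecidablePred (· ∈ T.innerVertices) :=
  fun v => inferInstanceAs (Decidable (2 ≤ T.degree v))

theorem apply_mem_innerVertices_iff [T.LocallyFinite] {g : Perm V} (hg : g ∈ graphAut T)
    (v : V) : g v ∈ T.innerVertices ↔ v ∈ T.innerVertices := by
  change 2 ≤ T.degree (g v) ↔ 2 ≤ T.degree v
  rw [show T.degree (g v) = T.degree v from Iso.degree_eq ⟨g, hg _ _⟩ v]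

def graphAutRestrict (S : Set V) (hS : ∀ g ∈ graphAut T, ∀ v, g v ∈ S ↔ v ∈ S) :
    graphAut T →* graphAut (T.induce S) where
  toFun g := ⟨g.1.subtypePerm (hS g.1 g.2), fun u v => g.2 u v⟩
  map_one' := rfl
  map_mul' _ _ := rfl

variable {S : Set V} {hS : ∀ g ∈ graphAut T, ∀ v, g v ∈ S ↔ v ∈ S}

theorem apply_eq_of_mem_ker_graphAutRestrict {g : graphAut T}
    (hg : g ∈ (graphAutRestrict S hS).ker) {v : V} (hv : v ∈ S) : g.1 v = v :=
  congrArg Subtype.val (Equiv.ext_iff.1 (congrArg Subtype.val hg) ⟨v, hv⟩)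

def neighborPerms (S : Set V) (hS : ∀ g ∈ graphAut T, ∀ v, g v ∈ S ↔ v ∈ S) :
    (graphAutRestrict S hS).ker →* ∀ v : S, Perm (T.neighborSet v) where
  toFun g v := g.1.1.subtypePerm fun x => by
    simpa only [mem_neighborSet, apply_eq_of_mem_ker_graphAutRestrict g.2 v.2] using g.1.2 v x
  map_one' := rfl
  map_mul' _ _ := rfl

theorem neighborPerms_injective (hcover : ∀ x ∉ S, ∃ v ∈ S, T.Adj v x) :
    Function.Injective (neighborPerms (T := T) S hS) := by
  intro g h hgh
  refine Subtype.ext (Subtype.ext (Equiv.ext fun x => ?_))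
  by_cases hx : x ∈ S
  · rw [apply_eq_of_mem_ker_graphAutRestrict g.2 hx, apply_eq_of_mem_ker_graphAutRestrict h.2 hx]
  · obtain ⟨v, hv, hvx⟩ := hcover x hx
    exact congrArg Subtype.val (Equiv.ext_iff.1 (congrFun hgh ⟨v, hv⟩) ⟨x, hvx⟩)

end Restriction

section Tree

variable {G : SimpleGraph V}

theorem subsingleton_neighborSet_of_degree_le_one {v : V} [Fintype (G.neighborSet v)]
    (h : G.degree v ≤ 1) : (G.neighborSet v).Subsingleton :=
  (Set.subsingleton_coe _).1 <|
    Fintype.card_le_one_iff_subsingleton.1 (by rwa [card_neighborSet_eq_degree])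

variable [Fintype V] [DecidableRel G.Adj]

theorem Preconnected.two_le_degree_of_adj (hG : G.Preconnected) (h3 : 2 < Fintype.card V)
    {x v : V} (hx : G.degree x ≤ 1) (hxv : G.Adj x v) : 2 ≤ G.degree v := by
  classical
  -- otherwise `v` would be an interior vertex of the path from `x` to a third vertex `y`
  by_contra! hv
  obtain ⟨y, -, hy⟩ := Finset.exists_mem_notMem_of_card_lt_card
    (s := {x, v}) (t := Finset.univ) ((Finset.card_le_two).trans_lt h3)
  obtain ⟨p, hp⟩ := hG.exists_isPath x y
  have hp_ne : ¬p.Nil := Walk.not_nil_of_ne (by rintro rfl; simp at hy)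
  have hsnd : p.snd = v := subsingleton_neighborSet_of_degree_le_one hx (p.adj_snd hp_ne) hxv
  refine hp.isTrail.not_mem_support_of_subsingleton_neighborSet (x := v) hxv.ne.symm
    (by rintro rfl; simp at hy) (subsingleton_neighborSet_of_degree_le_one (by omega)) ?_
  exact hsnd ▸ p.getVert_mem_support 1

theorem Preconnected.exists_adj_mem_innerVertices (hG : G.Preconnected) (h3 : 2 < Fintype.card V)
    {x : V} (hx : x ∉ G.innerVertices) : ∃ v ∈ G.innerVertices, G.Adj v x := by
  have : Nontrivial V := Fintype.one_lt_card_iff_nontrivial.1 (by omega)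
  obtain ⟨v, hxv⟩ := G.degree_pos_iff_exists_adj x |>.1 (hG.degree_pos_of_nontrivial x)
  exact ⟨v, hG.two_le_degree_of_adj h3 (by simpa [innerVertices] using hx) hxv, hxv.symm⟩

theorem IsTree.induce_innerVertices (hG : G.IsTree) (h3 : 2 < Fintype.card V) :
    (G.induce G.innerVertices).IsTree := by
  refine ⟨(connected_iff _).2 ⟨hG.connected.preconnected.induce_of_degree_eq_one fun v hv =>
    subsingleton_neighborSet_of_degree_le_one (by simpa [innerVertices] using hv), ?_⟩,
    hG.isAcyclic.induce _⟩
  obtain ⟨x⟩ := hG.connected.nonempty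
  by_cases hx : x ∈ G.innerVertices
  · exact ⟨⟨x, hx⟩⟩
  · obtain ⟨v, hv, -⟩ := hG.connected.preconnected.exists_adj_mem_innerVertices h3 hx
    exact ⟨⟨v, hv⟩⟩

theorem IsTree.card_innerVertices_lt (hG : G.IsTree) (h3 : 2 < Fintype.card V) :
    Fintype.card G.innerVertices < Fintype.card V := by
  have : Nontrivial V := Fintype.one_lt_card_iff_nontrivial.1 (by omega)
  obtain ⟨x, hx⟩ := hG.exists_vert_degree_one_of_nontrivial
  exact Fintype.card_subtype_lt (p := (· ∈ G.innerVertices))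
    (by simp [innerVertices, hx] : x ∉ G.innerVertices)

end Tree

end SimpleGraph

theorem isSolvable_graphAut_and_card_dvd_24_of_card_le_four {V : Type*} [Fintype V]
    (T : SimpleGraph V) (h : Fintype.card V ≤ 4) :
    Group.IsSolvable (graphAut T) ∧ Nat.card (graphAut T) ∣ 24 := by
  have := Perm.isSolvable_of_card_le_four h
  exact ⟨inferInstance,
    (Subgroup.card_subgroup_dvd_card _).trans (Perm.card_dvd_24_of_card_le_four h)⟩

theorem SimpleGraph.IsTree.isSolvable_graphAut_and_card_dvd_24_pow {V : Type*} [Fintype V]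
    {T : SimpleGraph V} [DecidableRel T.Adj] (hT : T.IsTree) (hdeg : ∀ v, T.degree v ≤ 4) :
    Group.IsSolvable (graphAut T) ∧ ∃ m, Nat.card (graphAut T) ∣ 24 ^ m := by
  induction h : Fintype.card V using Nat.strong_induction_on generalizing V with
  | _ n ih =>
    rcases le_or_gt n 2 with hn | hn
    · obtain ⟨hsolv, hcard⟩ := isSolvable_graphAut_and_card_dvd_24_of_card_le_four T (by omega)
      exact ⟨hsolv, 1, by simpa using hcard⟩
    classical
    subst h
    set S := T.innerVertices
    have hΦ := neighborPerms_injective (hS := fun _ => apply_mem_innerVertices_iff)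
      fun x hx => hT.connected.preconnected.exists_adj_mem_innerVertices hn hx
    obtain ⟨hsolv, m, hm⟩ := ih _ (hT.card_innerVertices_lt hn) (hT.induce_innerVertices hn)
      (fun v => ((Copy.induce T S).degree_le v).trans (hdeg v)) rfl
    have hnbr (v : S) : Fintype.card (T.neighborSet v) ≤ 4 :=
      (card_neighborSet_eq_degree T v).trans_le (hdeg v)
    have := fun v => Perm.isSolvable_of_card_le_four (hnbr v)
    refine ⟨Group.isSolvable_of_ker_injective _ hΦ, m + Fintype.card S, ?_⟩
    rw [pow_add]
    exact (MonoidHom.card_dvd_mul_of_ker_injective _ hΦ).trans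
      (mul_dvd_mul hm (Perm.card_pi_dvd_24_pow hnbr))

/-- The automorphism group of a finite tree in which every vertex
has degree at most 4 is a solvable group of order `2^j · 3^k` for some `j, k`. -/
theorem stmt_7 {V : Type*} [Fintype V] (T : SimpleGraph V) [DecidableRel T.Adj]
    (hT : T.IsTree) (hdeg : ∀ v : V, T.degree v ≤ 4) :
    IsSolvable ↥(graphAut T) ∧ ∃ j k : ℕ, Nat.card ↥(graphAut T) = 2 ^ j * 3 ^ k := by
  obtain ⟨hsolv, m, hm⟩ := hT.isSolvable_graphAut_and_card_dvd_24_pow hdeg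
  exact ⟨hsolv, Nat.exists_eq_two_pow_mul_three_pow_of_dvd_24_pow hm⟩
end

section
/- Two simple contractions with the same domain X(G) are range equivalent if and only if they have the same characteristic, and every characteristic map of R into G is the characteristic of some simple contraction with domain X(G). -/
open scoped Classical

/-- A directed multigraph. -/
structure MultiDigraph where
  V : Type
  E : Type
  s : E → V
  t : E → V

/-- An isomorphism of directed multigraphs. -/
structure DigraphIso (G H : MultiDigraph) where
  vEquiv : G.V ≃ H.V
  eEquiv : G.E ≃ H.E
  map_s : ∀ e, H.s (eEquiv e) = vEquiv (G.s e)
  map_t : ∀ e, H.t (eEquiv e) = vEquiv (G.t e)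

/-- An edge replacement rule `e → R`: a replacement graph `R` with distinguished
(distinct) initial and terminal vertices. -/
structure ReplacementRule where
  R : MultiDigraph
  init : R.V
  term : R.V
  ne : init ≠ term

/-- The simple expansion `G ◁ e₀` of `G` at the edge `e₀`: remove `e₀` and paste in
a copy of the replacement graph `R`, attaching its initial and terminal vertices to
the endpoints of `e₀`. -/
noncomputable def SimpleExpansion (Rr : ReplacementRule) (G : MultiDigraph) (e₀ : G.E) :
    MultiDigraph where
  V := G.V ⊕ {v : Rr.R.V // v ≠ Rr.init ∧ v ≠ Rr.term}
  E := {e : G.E // e ≠ e₀} ⊕ Rr.R.E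
  s := fun e =>
    match e with
    | .inl e => .inl (G.s e.1)
    | .inr ε =>
      if h1 : Rr.R.s ε = Rr.init then .inl (G.s e₀)
      else if h2 : Rr.R.s ε = Rr.term then .inl (G.t e₀)
      else .inr ⟨Rr.R.s ε, h1, h2⟩
  t := fun e =>
    match e with
    | .inl e => .inl (G.t e.1)
    | .inr ε =>
      if h1 : Rr.R.t ε = Rr.init then .inl (G.s e₀)
      else if h2 : Rr.R.t ε = Rr.term then .inl (G.t e₀)
      else .inr ⟨Rr.R.t ε, h1, h2⟩

/-- A characteristic map for `R` (or `R_loop`) in `G`: an isomorphism from `R`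
(allowing the initial and terminal vertices to be identified, which is the
`R_loop` case) onto a subgraph `S` of `G` such that every edge of `G` incident to
the image of an interior vertex of `R` lies in `S`. -/
structure CharMap (Rr : ReplacementRule) (G : MultiDigraph) where
  vMap : Rr.R.V → G.V
  eMap : Rr.R.E → G.E
  map_s : ∀ ε, G.s (eMap ε) = vMap (Rr.R.s ε)
  map_t : ∀ ε, G.t (eMap ε) = vMap (Rr.R.t ε)
  eInj : Function.Injective eMap
  vInj : ∀ u v, vMap u = vMap v → u = v ∨
    (u = Rr.init ∧ v = Rr.term) ∨ (u = Rr.term ∧ v = Rr.init)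
  full : ∀ v : Rr.R.V, v ≠ Rr.init → v ≠ Rr.term →
    ∀ e : G.E, (G.s e = vMap v ∨ G.t e = vMap v) → ∃ ε, eMap ε = e

/-- A simple contraction with domain `X(G)`: the inverse of a simple expansion
morphism, recorded by its graph pair diagram `(G, G′ ◁ e₀, φ)`. -/
structure SimpleContraction (Rr : ReplacementRule) (G : MultiDigraph) where
  G' : MultiDigraph
  e₀ : G'.E
  φ : DigraphIso G (SimpleExpansion Rr G' e₀)

/-- The characteristic of a simple contraction: the edge `ε` of `R` is sent to
`φ⁻¹(e₀ε)`, and correspondingly on vertices. -/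
noncomputable def SimpleContraction.char {Rr : ReplacementRule} {G : MultiDigraph}
    (c : SimpleContraction Rr G) : CharMap Rr G where
  vMap := fun v =>
    if h1 : v = Rr.init then c.φ.vEquiv.symm (.inl (c.G'.s c.e₀))
    else if h2 : v = Rr.term then c.φ.vEquiv.symm (.inl (c.G'.t c.e₀))
    else c.φ.vEquiv.symm (.inr ⟨v, h1, h2⟩)
  eMap := fun ε => c.φ.eEquiv.symm (.inr ε)
  map_s := by
    intro ε
    have h := c.φ.map_s (c.φ.eEquiv.symm (.inr ε))
    erw [Equiv.apply_symm_apply] at h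
    have h2 : G.s (c.φ.eEquiv.symm (.inr ε))
        = c.φ.vEquiv.symm ((SimpleExpansion Rr c.G' c.e₀).s (.inr ε)) := by
      rw [h, Equiv.symm_apply_apply]
    rw [h2]
    by_cases h1 : Rr.R.s ε = Rr.init
    · simp [SimpleExpansion, h1]
    · by_cases h2' : Rr.R.s ε = Rr.term <;>
        simp [SimpleExpansion, h1, h2', Rr.ne.symm]
  map_t := by
    intro ε
    have h := c.φ.map_t (c.φ.eEquiv.symm (.inr ε))
    erw [Equiv.apply_symm_apply] at h
    have h2 : G.t (c.φ.eEquiv.symm (.inr ε))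
        = c.φ.vEquiv.symm ((SimpleExpansion Rr c.G' c.e₀).t (.inr ε)) := by
      rw [h, Equiv.symm_apply_apply]
    rw [h2]
    by_cases h1 : Rr.R.t ε = Rr.init
    · simp [SimpleExpansion, h1]
    · by_cases h2' : Rr.R.t ε = Rr.term <;>
        simp [SimpleExpansion, h1, h2', Rr.ne.symm]
  eInj := by
    intro a b hab
    have := c.φ.eEquiv.symm.injective hab
    exact Sum.inr_injective this
  vInj := by
    intro u v h
    try simp only at h
    by_cases hu1 : u = Rr.init
    · by_cases hv1 : v = Rr.init
      · exact Or.inl (hu1.trans hv1.symm)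
      · by_cases hv2 : v = Rr.term
        · exact Or.inr (Or.inl ⟨hu1, hv2⟩)
        · exfalso
          rw [dif_pos hu1, dif_neg hv1, dif_neg hv2] at h
          have := c.φ.vEquiv.symm.injective h
          simp at this
    · by_cases hu2 : u = Rr.term
      · by_cases hv2 : v = Rr.term
        · exact Or.inl (hu2.trans hv2.symm)
        · by_cases hv1 : v = Rr.init
          · exact Or.inr (Or.inr ⟨hu2, hv1⟩)
          · exfalso
            rw [dif_neg hu1, dif_pos hu2, dif_neg hv1, dif_neg hv2] at h
            have := c.φ.vEquiv.symm.injective h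
            simp at this
      · by_cases hv1 : v = Rr.init
        · exfalso
          rw [dif_neg hu1, dif_neg hu2, dif_pos hv1] at h
          have := c.φ.vEquiv.symm.injective h
          simp at this
        · by_cases hv2 : v = Rr.term
          · exfalso
            rw [dif_neg hu1, dif_neg hu2, dif_neg hv1, dif_pos hv2] at h
            have := c.φ.vEquiv.symm.injective h
            simp at this
          · rw [dif_neg hu1, dif_neg hu2, dif_neg hv1, dif_neg hv2] at h
            have := c.φ.vEquiv.symm.injective h
            exact Or.inl (congrArg Subtype.val (Sum.inr_injective this))
  full := by
    intro v hv1 hv2 e he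
    rcases hEe : c.φ.eEquiv e with e' | ε
    · exfalso
      rcases he with he | he
      · have h := c.φ.map_s e
        rw [hEe] at h
        -- h : (Exp).s (.inl e') = φ.vEquiv (G.s e)
        rw [he] at h
        simp only [SimpleExpansion, dif_neg hv1, dif_neg hv2, Equiv.apply_symm_apply] at h
        exact (by erw [Equiv.apply_symm_apply] at h; simp at h)
      · have h := c.φ.map_t e
        rw [hEe] at h
        rw [he] at h
        simp only [SimpleExpansion, dif_neg hv1, dif_neg hv2, Equiv.apply_symm_apply] at h
        exact (by erw [Equiv.apply_symm_apply] at h; simp at h)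
    · refine ⟨ε, ?_⟩
      show c.φ.eEquiv.symm (Sum.inr ε) = e
      rw [← hEe, Equiv.symm_apply_apply]

/-- Two simple contractions `c₁, c₂` with domain `X(G)` are range equivalent, i.e.
`c₂ = φ ∘ c₁` for a base isomorphism `φ`: there is an isomorphism
`ψ : G₁′ → G₂′` carrying the contracted edge of one diagram to that of the other
and compatible with the two diagram isomorphisms. -/
def RangeEquiv {Rr : ReplacementRule} {G : MultiDigraph}
    (c₁ c₂ : SimpleContraction Rr G) : Prop :=
  ∃ ψ : DigraphIso c₁.G' c₂.G',
    ψ.eEquiv c₁.e₀ = c₂.e₀ ∧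
    (∀ e : G.E,
      (∀ (e' : c₁.G'.E) (h : e' ≠ c₁.e₀), c₁.φ.eEquiv e = .inl ⟨e', h⟩ →
        ∃ h₂ : ψ.eEquiv e' ≠ c₂.e₀, c₂.φ.eEquiv e = .inl ⟨ψ.eEquiv e', h₂⟩) ∧
      (∀ ε : Rr.R.E, c₁.φ.eEquiv e = .inr ε → c₂.φ.eEquiv e = .inr ε)) ∧
    (∀ v : G.V,
      (∀ w : c₁.G'.V, c₁.φ.vEquiv v = .inl w → c₂.φ.vEquiv v = .inl (ψ.vEquiv w)) ∧
      (∀ w : {v : Rr.R.V // v ≠ Rr.init ∧ v ≠ Rr.term},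
        c₁.φ.vEquiv v = .inr w → c₂.φ.vEquiv v = .inr w))

/-!
The composite `c₂ ∘ c₁⁻¹` of two simple contractions is an isomorphism
`σ : G₁′ ◁ e₁ ≅ G₂′ ◁ e₂`. Range equivalence says that `σ` is induced by an isomorphism of the
base graphs carrying `e₁` to `e₂`; equality of characteristics says that `σ` is the identity on
the pasted-in copy of `R`. These conditions agree: an isomorphism of expansions fixing `R`
restricts to the parts of the base graphs off `e₁` and `e₂`, and it matches the endpoints of `e₁`
with those of `e₂`, so it descends.

Conversely, a characteristic map `χ` is realised by collapsing its image (the interior vertices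
and all edges of `R`) to one new edge from `χ(init)` to `χ(term)`: since every edge at an
interior vertex lies in the image, the remaining edges avoid the interior vertices, and `G` is
the expansion of the collapsed graph at the new edge.
-/

namespace Equiv

variable {α β γ : Type*}

lemma isLeft_iff_isLeft_apply {σ : α ⊕ γ ≃ β ⊕ γ} (h : ∀ c, σ (.inr c) = .inr c)
    (x : α ⊕ γ) : x.isLeft ↔ (σ x).isLeft := by
  rcases x with a | c
  · rcases hσ : σ (.inl a) with b | c
    · simp
    · exact absurd (σ.injective (hσ.trans (h c).symm)) Sum.inl_ne_inr
  · simp [h]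

def sumCancelRight (σ : α ⊕ γ ≃ β ⊕ γ) (h : ∀ c, σ (.inr c) = .inr c) : α ≃ β :=
  sumIsLeft.symm.trans ((σ.subtypeEquiv (isLeft_iff_isLeft_apply h)).trans sumIsLeft)

lemma apply_inl_eq_inl_sumCancelRight {σ : α ⊕ γ ≃ β ⊕ γ} (h : ∀ c, σ (.inr c) = .inr c)
    (a : α) : σ (.inl a) = .inl (sumCancelRight σ h a) := by
  simp [sumCancelRight]

variable [DecidableEq α] [DecidableEq β] {a₀ : α} {b₀ : β}

def extendNe (f : {a // a ≠ a₀} ≃ {b // b ≠ b₀}) : α ≃ β :=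
  (optionSubtypeNe a₀).symm.trans (f.optionCongr.trans (optionSubtypeNe b₀))

@[simp]
lemma extendNe_self (f : {a // a ≠ a₀} ≃ {b // b ≠ b₀}) : extendNe f a₀ = b₀ := by
  simp [extendNe]

lemma extendNe_of_ne (f : {a // a ≠ a₀} ≃ {b // b ≠ b₀}) {a : α} (h : a ≠ a₀) :
    extendNe f a = f ⟨a, h⟩ := by
  simp [extendNe, h]

end Equiv

namespace Sum

variable {α β γ : Type*}

theorem eq_map_id_iff {f : α → β} {y : α ⊕ γ} {z : β ⊕ γ} :
    z = Sum.map f id y ↔ (∀ a, y = inl a → z = inl (f a)) ∧ ∀ c, y = inr c → z = inr c := by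
  rcases y with a | c <;> simp

theorem map_val_eq_map_val_iff {p : α → Prop} {q : β → Prop} {f : α → β}
    {y : Subtype p ⊕ γ} {z : Subtype q ⊕ γ} :
    Sum.map Subtype.val id z = Sum.map (f ∘ Subtype.val) id y ↔
      (∀ a (h : p a), y = inl ⟨a, h⟩ → ∃ h₂ : q (f a), z = inl ⟨f a, h₂⟩) ∧
        ∀ c, y = inr c → z = inr c := by
  rcases y with ⟨a, h⟩ | c <;> rcases z with ⟨b, hb⟩ | d <;> simp
  · exact ⟨by rintro rfl a' _ rfl; exact ⟨hb, rfl⟩, fun H => (H a h rfl).2⟩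
  · exact h

end Sum

namespace SimpleExpansion

variable (Rr : ReplacementRule) (G : MultiDigraph) (e₀ : G.E)

/-- The vertex `e₀v` of `G ◁ e₀`. -/
noncomputable def replVertex (v : Rr.R.V) : (SimpleExpansion Rr G e₀).V :=
  if h1 : v = Rr.init then .inl (G.s e₀)
  else if h2 : v = Rr.term then .inl (G.t e₀)
  else .inr ⟨v, h1, h2⟩

variable {Rr G e₀}

-- `SimpleExpansion` must be unfolded for `simp` to see its vertex type as a sum.
@[simp]
lemma replVertex_init : replVertex Rr G e₀ Rr.init = .inl (G.s e₀) := by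
  simp [replVertex, SimpleExpansion]

@[simp]
lemma replVertex_term : replVertex Rr G e₀ Rr.term = .inl (G.t e₀) := by
  simp [replVertex, SimpleExpansion, Rr.ne.symm]

lemma replVertex_of_interior (u : {v : Rr.R.V // v ≠ Rr.init ∧ v ≠ Rr.term}) :
    replVertex Rr G e₀ u = .inr u := by
  simp [replVertex, SimpleExpansion, u.2.1, u.2.2]

lemma s_inl (e : {e // e ≠ e₀}) : (SimpleExpansion Rr G e₀).s (.inl e) = .inl (G.s e) := rfl

lemma t_inl (e : {e // e ≠ e₀}) : (SimpleExpansion Rr G e₀).t (.inl e) = .inl (G.t e) := rfl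

lemma s_inr (ε : Rr.R.E) :
    (SimpleExpansion Rr G e₀).s (.inr ε) = replVertex Rr G e₀ (Rr.R.s ε) := rfl

lemma t_inr (ε : Rr.R.E) :
    (SimpleExpansion Rr G e₀).t (.inr ε) = replVertex Rr G e₀ (Rr.R.t ε) := rfl

end SimpleExpansion

namespace DigraphIso

variable {G H K : MultiDigraph}

def symm (φ : DigraphIso G H) : DigraphIso H G where
  vEquiv := φ.vEquiv.symm
  eEquiv := φ.eEquiv.symm
  map_s e := by rw [Equiv.eq_symm_apply, ← φ.map_s, Equiv.apply_symm_apply]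
  map_t e := by rw [Equiv.eq_symm_apply, ← φ.map_t, Equiv.apply_symm_apply]

def trans (φ : DigraphIso G H) (ψ : DigraphIso H K) : DigraphIso G K where
  vEquiv := φ.vEquiv.trans ψ.vEquiv
  eEquiv := φ.eEquiv.trans ψ.eEquiv
  map_s e := by simp [ψ.map_s, φ.map_s]
  map_t e := by simp [ψ.map_t, φ.map_t]

end DigraphIso

attribute [ext] CharMap

namespace SimpleContraction

open SimpleExpansion

variable {Rr : ReplacementRule} {G : MultiDigraph}

lemma char_vMap (c : SimpleContraction Rr G) (v : Rr.R.V) :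
    c.char.vMap v = c.φ.vEquiv.symm (replVertex Rr c.G' c.e₀ v) := by
  simp only [char, replVertex, SimpleExpansion]
  split_ifs <;> rfl

lemma char_eMap (c : SimpleContraction Rr G) (ε : Rr.R.E) :
    c.char.eMap ε = c.φ.eEquiv.symm (.inr ε) := rfl

end SimpleContraction

namespace DigraphIso

open SimpleExpansion

variable {Rr : ReplacementRule} {G₁ G₂ : MultiDigraph} {e₁ : G₁.E} {e₂ : G₂.E}

lemma map_replVertex (ψ : DigraphIso G₁ G₂) (hψ : ψ.eEquiv e₁ = e₂) (v : Rr.R.V) :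
    Sum.map ψ.vEquiv id (replVertex Rr G₁ e₁ v) = replVertex Rr G₂ e₂ v := by
  by_cases h1 : v = Rr.init
  · simp [h1, ← ψ.map_s, hψ]
  by_cases h2 : v = Rr.term
  · simp [h2, ← ψ.map_t, hψ]
  simp [replVertex_of_interior ⟨v, h1, h2⟩]

variable (σ : DigraphIso (SimpleExpansion Rr G₁ e₁) (SimpleExpansion Rr G₂ e₂))

def FixesReplacement : Prop :=
  (∀ v, σ.vEquiv (replVertex Rr G₁ e₁ v) = replVertex Rr G₂ e₂ v) ∧
    ∀ ε, σ.eEquiv (.inr ε) = .inr ε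

/-- `σ` is the isomorphism `G₁ ◁ e₁ ≅ G₂ ◁ e₂` induced by `ψ`. -/
def IsExpansionOf (ψ : DigraphIso G₁ G₂) : Prop :=
  ψ.eEquiv e₁ = e₂ ∧
    (∀ x, Sum.map Subtype.val id (σ.eEquiv x) = Sum.map (ψ.eEquiv ∘ Subtype.val) id x) ∧
    ∀ x, σ.vEquiv x = Sum.map ψ.vEquiv id x

variable {σ}

lemma IsExpansionOf.fixesReplacement {ψ : DigraphIso G₁ G₂} (h : σ.IsExpansionOf ψ) :
    σ.FixesReplacement := by
  obtain ⟨hψ, hE, hV⟩ := h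
  exact ⟨fun v => by rw [hV, map_replVertex ψ hψ], fun ε =>
    Sum.map_injective.2 ⟨Subtype.val_injective, Function.injective_id⟩ (hE (.inr ε))⟩

end DigraphIso

namespace DigraphIso.FixesReplacement

open SimpleExpansion

variable {Rr : ReplacementRule} {G₁ G₂ : MultiDigraph} {e₁ : G₁.E} {e₂ : G₂.E}
  {σ : DigraphIso (SimpleExpansion Rr G₁ e₁) (SimpleExpansion Rr G₂ e₂)}
  (h : σ.FixesReplacement)

lemma vEquiv_inr (h : σ.FixesReplacement) (u : {v : Rr.R.V // v ≠ Rr.init ∧ v ≠ Rr.term}) :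
    σ.vEquiv (.inr u) = .inr u := by
  simpa only [replVertex_of_interior] using h.1 u

noncomputable def baseVEquiv : G₁.V ≃ G₂.V := σ.vEquiv.sumCancelRight h.vEquiv_inr

noncomputable def baseEEquiv : G₁.E ≃ G₂.E := (σ.eEquiv.sumCancelRight h.2).extendNe

lemma vEquiv_inl (v : G₁.V) : σ.vEquiv (.inl v) = .inl (h.baseVEquiv v) :=
  Equiv.apply_inl_eq_inl_sumCancelRight _ v

lemma eEquiv_inl (e : {e // e ≠ e₁}) : σ.eEquiv (.inl e) = .inl (σ.eEquiv.sumCancelRight h.2 e) :=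
  Equiv.apply_inl_eq_inl_sumCancelRight _ e

lemma s_baseEEquiv (e : G₁.E) : G₂.s (h.baseEEquiv e) = h.baseVEquiv (G₁.s e) := by
  by_cases he : e = e₁
  · have := h.1 Rr.init
    rw [replVertex_init, replVertex_init, h.vEquiv_inl] at this
    rw [he, baseEEquiv, Equiv.extendNe_self]
    exact (Sum.inl_injective this).symm
  · have := σ.map_s (.inl ⟨e, he⟩)
    rw [h.eEquiv_inl, s_inl, s_inl, h.vEquiv_inl] at this
    rw [baseEEquiv, Equiv.extendNe_of_ne _ he]
    exact Sum.inl_injective this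

lemma t_baseEEquiv (e : G₁.E) : G₂.t (h.baseEEquiv e) = h.baseVEquiv (G₁.t e) := by
  by_cases he : e = e₁
  · have := h.1 Rr.term
    rw [replVertex_term, replVertex_term, h.vEquiv_inl] at this
    rw [he, baseEEquiv, Equiv.extendNe_self]
    exact (Sum.inl_injective this).symm
  · have := σ.map_t (.inl ⟨e, he⟩)
    rw [h.eEquiv_inl, t_inl, t_inl, h.vEquiv_inl] at this
    rw [baseEEquiv, Equiv.extendNe_of_ne _ he]
    exact Sum.inl_injective this

noncomputable def base : DigraphIso G₁ G₂ :=
  ⟨h.baseVEquiv, h.baseEEquiv, h.s_baseEEquiv, h.t_baseEEquiv⟩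

lemma isExpansionOf_base : σ.IsExpansionOf h.base := by
  refine ⟨Equiv.extendNe_self _, ?_, ?_⟩
  · rintro (⟨e, he⟩ | ε)
    · rw [h.eEquiv_inl]
      simp [base, baseEEquiv, Equiv.extendNe_of_ne _ he]
    · rw [h.2]; rfl
  · rintro (v | u)
    · exact h.vEquiv_inl v
    · exact h.vEquiv_inr u

end DigraphIso.FixesReplacement

namespace SimpleContraction

variable {Rr : ReplacementRule} {G : MultiDigraph} (c₁ c₂ : SimpleContraction Rr G)

lemma char_eq_char_iff : c₁.char = c₂.char ↔ (c₁.φ.symm.trans c₂.φ).FixesReplacement := by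
  rw [CharMap.ext_iff, funext_iff, funext_iff]
  refine and_congr (forall_congr' fun v => ?_) (forall_congr' fun ε => ?_)
  · rw [char_vMap, char_vMap]; exact Equiv.eq_symm_apply _
  · rw [char_eMap, char_eMap]; exact Equiv.eq_symm_apply _

lemma rangeEquiv_iff :
    RangeEquiv c₁ c₂ ↔ ∃ ψ, (c₁.φ.symm.trans c₂.φ).IsExpansionOf ψ := by
  refine exists_congr fun ψ => and_congr_right fun _ => and_congr ?_ ?_
  · rw [← c₁.φ.eEquiv.forall_congr_right]
    refine forall_congr' fun e => ?_
    simp only [DigraphIso.trans, DigraphIso.symm, Equiv.trans_apply, Equiv.symm_apply_apply]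
    exact (Sum.map_val_eq_map_val_iff (y := c₁.φ.eEquiv e) (z := c₂.φ.eEquiv e)).symm
  · rw [← c₁.φ.vEquiv.forall_congr_right]
    refine forall_congr' fun v => ?_
    simp only [DigraphIso.trans, DigraphIso.symm, Equiv.trans_apply, Equiv.symm_apply_apply]
    exact Sum.eq_map_id_iff.symm

end SimpleContraction

namespace CharMap

open SimpleExpansion

variable {Rr : ReplacementRule} {G : MultiDigraph} (χ : CharMap Rr G)

def interiorImage : Set G.V := χ.vMap '' {v | v ≠ Rr.init ∧ v ≠ Rr.term}

lemma injOn_vMap : Set.InjOn χ.vMap {v | v ≠ Rr.init ∧ v ≠ Rr.term} := by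
  intro u hu w _ huw
  rcases χ.vInj u w huw with h | ⟨h, _⟩ | ⟨h, _⟩
  exacts [h, absurd h hu.1, absurd h hu.2]

variable {χ}

lemma vMap_mem_interiorImage_iff {v : Rr.R.V} :
    χ.vMap v ∈ χ.interiorImage ↔ v ≠ Rr.init ∧ v ≠ Rr.term := by
  refine ⟨fun ⟨w, hw, hwv⟩ => ?_, fun h => ⟨v, h, rfl⟩⟩
  rcases χ.vInj w v hwv with rfl | ⟨h, _⟩ | ⟨h, _⟩
  exacts [hw, absurd h hw.1, absurd h hw.2]

lemma s_notMem_interiorImage {e : G.E} (he : e ∉ Set.range χ.eMap) :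
    G.s e ∉ χ.interiorImage := fun ⟨w, hw, hwe⟩ => he (χ.full w hw.1 hw.2 e (.inl hwe.symm))

lemma t_notMem_interiorImage {e : G.E} (he : e ∉ Set.range χ.eMap) :
    G.t e ∉ χ.interiorImage := fun ⟨w, hw, hwe⟩ => he (χ.full w hw.1 hw.2 e (.inr hwe.symm))

lemma vMap_init_notMem_interiorImage : χ.vMap Rr.init ∉ χ.interiorImage := by
  simp [vMap_mem_interiorImage_iff]

lemma vMap_term_notMem_interiorImage : χ.vMap Rr.term ∉ χ.interiorImage := by
  simp [vMap_mem_interiorImage_iff]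

variable (χ)

/-- `G` with the image of `χ` collapsed to the single edge `none`. -/
def contractedGraph : MultiDigraph where
  V := {v // v ∉ χ.interiorImage}
  E := Option {e // e ∉ Set.range χ.eMap}
  s
    | some e => ⟨G.s e, s_notMem_interiorImage e.2⟩
    | none => ⟨χ.vMap Rr.init, vMap_init_notMem_interiorImage⟩
  t
    | some e => ⟨G.t e, t_notMem_interiorImage e.2⟩
    | none => ⟨χ.vMap Rr.term, vMap_term_notMem_interiorImage⟩

def contractedEdge : χ.contractedGraph.E := none

noncomputable def contractionVEquiv :
    G.V ≃ (SimpleExpansion Rr χ.contractedGraph χ.contractedEdge).V :=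
  (Equiv.sumCompl (· ∈ χ.interiorImage)).symm.trans <| (Equiv.sumComm _ _).trans <|
    Equiv.sumCongr (Equiv.refl _) (Equiv.Set.imageOfInjOn _ _ χ.injOn_vMap).symm

noncomputable def contractionEEquiv :
    G.E ≃ (SimpleExpansion Rr χ.contractedGraph χ.contractedEdge).E :=
  (Equiv.sumCompl (· ∈ Set.range χ.eMap)).symm.trans <| (Equiv.sumComm _ _).trans <|
    Equiv.sumCongr
      ((Equiv.optionIsSomeEquiv _).symm.trans
        (Equiv.subtypeEquivRight fun _ => Option.isSome_iff_ne_none))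
      (Equiv.ofInjective _ χ.eInj).symm

variable {χ}

lemma contractionVEquiv_of_notMem {v : G.V} (hv : v ∉ χ.interiorImage) :
    χ.contractionVEquiv v = .inl ⟨v, hv⟩ := by
  simp only [contractionVEquiv, Equiv.trans_apply, Equiv.sumCompl_symm_apply_of_neg hv]
  rfl

lemma contractionVEquiv_vMap (v : Rr.R.V) :
    χ.contractionVEquiv (χ.vMap v) = replVertex Rr χ.contractedGraph χ.contractedEdge v := by
  by_cases h1 : v = Rr.init
  · rw [h1, contractionVEquiv_of_notMem vMap_init_notMem_interiorImage, replVertex_init]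
    rfl
  by_cases h2 : v = Rr.term
  · rw [h2, contractionVEquiv_of_notMem vMap_term_notMem_interiorImage, replVertex_term]
    rfl
  have hv : χ.vMap v ∈ χ.interiorImage := vMap_mem_interiorImage_iff.2 ⟨h1, h2⟩
  rw [replVertex_of_interior ⟨v, h1, h2⟩]
  simp only [contractionVEquiv, Equiv.trans_apply, Equiv.sumCompl_symm_apply_of_pos hv]
  exact congrArg Sum.inr ((Equiv.symm_apply_eq _).2 rfl)

lemma contractionEEquiv_of_notMem {e : G.E} (he : e ∉ Set.range χ.eMap) :
    χ.contractionEEquiv e = .inl ⟨some ⟨e, he⟩, Option.some_ne_none _⟩ := by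
  simp only [contractionEEquiv, Equiv.trans_apply, Equiv.sumCompl_symm_apply_of_neg he]
  rfl

lemma contractionEEquiv_eMap (ε : Rr.R.E) : χ.contractionEEquiv (χ.eMap ε) = .inr ε := by
  simp only [contractionEEquiv, Equiv.trans_apply,
    Equiv.sumCompl_symm_apply_of_pos (Set.mem_range_self ε)]
  exact congrArg Sum.inr (Equiv.ofInjective_symm_apply χ.eInj ε)

variable (χ)

lemma s_contractionEEquiv (e : G.E) :
    (SimpleExpansion Rr χ.contractedGraph χ.contractedEdge).s (χ.contractionEEquiv e) =
      χ.contractionVEquiv (G.s e) := by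
  by_cases he : e ∈ Set.range χ.eMap
  · obtain ⟨ε, rfl⟩ := he
    rw [contractionEEquiv_eMap, s_inr, χ.map_s, contractionVEquiv_vMap]
  · rw [contractionEEquiv_of_notMem he, s_inl,
      contractionVEquiv_of_notMem (s_notMem_interiorImage he)]
    rfl

lemma t_contractionEEquiv (e : G.E) :
    (SimpleExpansion Rr χ.contractedGraph χ.contractedEdge).t (χ.contractionEEquiv e) =
      χ.contractionVEquiv (G.t e) := by
  by_cases he : e ∈ Set.range χ.eMap
  · obtain ⟨ε, rfl⟩ := he
    rw [contractionEEquiv_eMap, t_inr, χ.map_t, contractionVEquiv_vMap]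
  · rw [contractionEEquiv_of_notMem he, t_inl,
      contractionVEquiv_of_notMem (t_notMem_interiorImage he)]
    rfl

noncomputable def toContraction : SimpleContraction Rr G :=
  ⟨χ.contractedGraph, χ.contractedEdge, ⟨χ.contractionVEquiv, χ.contractionEEquiv,
    χ.s_contractionEEquiv, χ.t_contractionEEquiv⟩⟩

lemma char_toContraction : χ.toContraction.char = χ := by
  refine CharMap.ext (funext fun v => ?_) (funext fun ε => ?_)
  · rw [SimpleContraction.char_vMap]
    exact (Equiv.symm_apply_eq _).2 (contractionVEquiv_vMap v).symm
  · exact (Equiv.symm_apply_eq _).2 (contractionEEquiv_eMap ε).symm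

end CharMap

/-- Every characteristic map of `R` into `G` is the characteristic
of some simple contraction with domain `X(G)`, and two simple contractions with
domain `X(G)` are range equivalent if and only if they have the same
characteristic. -/
theorem stmt_14 (Rr : ReplacementRule) (G : MultiDigraph) :
    (∀ χ : CharMap Rr G, ∃ c : SimpleContraction Rr G, c.char = χ) ∧
    (∀ c₁ c₂ : SimpleContraction Rr G, RangeEquiv c₁ c₂ ↔ c₁.char = c₂.char) := by
  refine ⟨fun χ => ⟨χ.toContraction, χ.char_toContraction⟩, fun c₁ c₂ => ?_⟩
  rw [SimpleContraction.rangeEquiv_iff, SimpleContraction.char_eq_char_iff]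
  exact ⟨fun ⟨_, h⟩ => h.fixesReplacement, fun h => ⟨_, h.isExpansionOf_base⟩⟩
end

section
/- In the poset of range-equivalence classes of rearrangements with a fixed domain, ordered by [f] ⪯ [g] iff g = x∘f for an expansion morphism x, every pair of elements has a least upper bound; consequently every finite nonempty subset has a least upper bound. -/
open CategoryTheory

/-- In the groupoid of rearrangements, `Precedes IsExp f g` expresses `[f] ⪯ [g]`:
`g = x ∘ f` for some expansion morphism `x`.  Here a rearrangement with domain
`X(A)` is recorded as a pair `⟨B, f⟩` with `f : A ⟶ B`. -/
def Precedes {C : Type*} [Groupoid C] (IsExp : ∀ A B : C, (A ⟶ B) → Prop)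
    {A : C} (f g : Σ B : C, A ⟶ B) : Prop :=
  ∃ x : f.1 ⟶ g.1, IsExp f.1 g.1 x ∧ g.2 = f.2 ≫ x

lemma precedes_refl {C : Type*} [Groupoid C] (IsExp : ∀ A B : C, (A ⟶ B) → Prop)
    (hexp_id : ∀ A : C, IsExp A A (𝟙 A)) {A : C} (f : Σ B : C, A ⟶ B) :
    Precedes IsExp f f :=
  ⟨𝟙 f.1, hexp_id f.1, by simp⟩

lemma precedes_trans {C : Type*} [Groupoid C] (IsExp : ∀ A B : C, (A ⟶ B) → Prop)
    (hexp_comp : ∀ (A B D : C) (x : A ⟶ B) (y : B ⟶ D),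
      IsExp A B x → IsExp B D y → IsExp A D (x ≫ y))
    {A : C} {f g h : Σ B : C, A ⟶ B}
    (h1 : Precedes IsExp f g) (h2 : Precedes IsExp g h) : Precedes IsExp f h := by
  obtain ⟨x, hx, hfx⟩ := h1
  obtain ⟨y, hy, hgy⟩ := h2
  exact ⟨x ≫ y, hexp_comp _ _ _ _ _ hx hy, by rw [hgy, hfx, Category.assoc]⟩

lemma binary_lub {C : Type*} [Groupoid C]
    (IsExp : ∀ A B : C, (A ⟶ B) → Prop)
    (hlub_id : ∀ (A B : C) (f : A ⟶ B),
      ∃ h : Σ D : C, A ⟶ D,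
        Precedes IsExp ⟨B, f⟩ h ∧ Precedes IsExp ⟨A, 𝟙 A⟩ h ∧
        ∀ h' : Σ D : C, A ⟶ D,
          Precedes IsExp ⟨B, f⟩ h' → Precedes IsExp ⟨A, 𝟙 A⟩ h' →
          Precedes IsExp h h')
    (A : C) (f g : Σ B : C, A ⟶ B) :
    ∃ h : Σ B : C, A ⟶ B,
      Precedes IsExp f h ∧ Precedes IsExp g h ∧
      ∀ h', Precedes IsExp f h' → Precedes IsExp g h' → Precedes IsExp h h' := by
  obtain ⟨B, fm⟩ := f
  obtain ⟨B', gm⟩ := g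
  -- translate to domain B
  obtain ⟨h, ⟨y, hy, hky⟩, ⟨x, hx, hix⟩, hmin⟩ :=
    hlub_id B B' (Groupoid.inv fm ≫ gm)
  refine ⟨⟨h.1, fm ≫ h.2⟩, ⟨x, hx, by simp at hix; rw [hix]⟩,
    ⟨y, hy, ?_⟩, ?_⟩
  · show fm ≫ h.2 = gm ≫ y
    rw [hky]
    simp
  · rintro ⟨E, hm⟩ ⟨u, hu, hfu⟩ ⟨v, hv, hgv⟩
    have h1 : Precedes IsExp ⟨B', Groupoid.inv fm ≫ gm⟩ ⟨E, Groupoid.inv fm ≫ hm⟩ :=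
      ⟨v, hv, by simp only at hgv ⊢; rw [hgv, Category.assoc]⟩
    have h2 : Precedes IsExp ⟨B, 𝟙 B⟩ ⟨E, Groupoid.inv fm ≫ hm⟩ :=
      ⟨u, hu, by simp only at hfu ⊢; rw [hfu]; simp⟩
    obtain ⟨z, hz, hhz⟩ := hmin _ h1 h2
    refine ⟨z, hz, ?_⟩
    show hm = (fm ≫ h.2) ≫ z
    simp only at hhz
    rw [Category.assoc, ← hhz]
    simp

/-- In the poset of range-equivalence classes of rearrangements
with a fixed domain, ordered by `[f] ⪯ [g]` iff `g = x∘f` for an expansion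
morphism `x`, every pair of elements has a least upper bound; consequently every
finite nonempty subset has a least upper bound.

The groupoid `C` is the groupoid of rearrangements between limit spaces; `IsExp`
singles out the expansion morphisms, which contain the identities and are closed
under composition; `hlub_id` is the key input that for every rearrangement `f`
the classes `[f]` and `[id]` have a least upper bound (uniqueness of the reduced
graph pair diagram). -/
theorem stmt_15 {C : Type*} [Groupoid C]
    (IsExp : ∀ A B : C, (A ⟶ B) → Prop)
    (hexp_id : ∀ A : C, IsExp A A (𝟙 A))
    (hexp_comp : ∀ (A B D : C) (x : A ⟶ B) (y : B ⟶ D),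
      IsExp A B x → IsExp B D y → IsExp A D (x ≫ y))
    (hlub_id : ∀ (A B : C) (f : A ⟶ B),
      ∃ h : Σ D : C, A ⟶ D,
        Precedes IsExp ⟨B, f⟩ h ∧ Precedes IsExp ⟨A, 𝟙 A⟩ h ∧
        ∀ h' : Σ D : C, A ⟶ D,
          Precedes IsExp ⟨B, f⟩ h' → Precedes IsExp ⟨A, 𝟙 A⟩ h' →
          Precedes IsExp h h') :
    (∀ (A : C) (f g : Σ B : C, A ⟶ B),
      ∃ h : Σ B : C, A ⟶ B,
        Precedes IsExp f h ∧ Precedes IsExp g h ∧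
        ∀ h', Precedes IsExp f h' → Precedes IsExp g h' → Precedes IsExp h h') ∧
    (∀ (A : C) (l : List (Σ B : C, A ⟶ B)), l ≠ [] →
      ∃ h : Σ B : C, A ⟶ B,
        (∀ f ∈ l, Precedes IsExp f h) ∧
        ∀ h', (∀ f ∈ l, Precedes IsExp f h') → Precedes IsExp h h') := by
  have bin := binary_lub IsExp hlub_id
  refine ⟨bin, ?_⟩
  intro A l
  induction l with
  | nil => intro h; exact absurd rfl h
  | cons f l ih =>
    intro _
    rcases eq_or_ne l [] with rfl | hl
    · refine ⟨f, ?_, ?_⟩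
      · intro f' hf'
        rw [List.mem_singleton] at hf'
        rw [hf']
        exact precedes_refl IsExp hexp_id f
      · intro h' hh'
        exact hh' f (by simp)
    · obtain ⟨h, hub, hmin⟩ := ih hl
      obtain ⟨k, hfk, hhk, hkmin⟩ := bin A f h
      refine ⟨k, ?_, ?_⟩
      · intro f' hf'
        rcases List.mem_cons.mp hf' with rfl | hf'
        · exact hfk
        · exact precedes_trans IsExp hexp_comp (hub f' hf') hhk
      · intro h' hh'
        exact hkmin h' (hh' f (by simp))
          (hmin h' fun f' hf' => hh' f' (List.mem_cons_of_mem _ hf'))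
end

section
/- The intersection of two cubes in K(𝒢) is either empty or a common face of both, given that every pair of vertices has a least upper bound and each cube equals the order interval between its base and apex, with faces being exactly the closed subintervals. -/
/-- `[b', a']` is a face of the cube `[b, a]`: a closed subinterval that is again a
cube. -/
def IsFace {α : Type*} [Preorder α] (IsCube : α → α → Prop)
    (b' a' b a : α) : Prop :=
  IsCube b' a' ∧ b ≤ b' ∧ a' ≤ a

/-- In the cube complex `K(𝒢)`, the intersection of two cubes is
either empty or a common face of both.

The vertex set is a poset in which every pair of elements has a least upper bound
(`SemilatticeSup`).  A cube is a (finite) order interval `[b, a]`, and its faces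
are exactly the closed subintervals that are again cubes; the hypothesis `hsub`
records that closed subintervals of cubes are cubes. -/
theorem stmt_17 {α : Type*} [SemilatticeSup α] (IsCube : α → α → Prop)
    (hfin : ∀ b a, IsCube b a → (Set.Icc b a).Finite)
    (hsub : ∀ b a b' a', IsCube b a → b ≤ b' → b' ≤ a' → a' ≤ a → IsCube b' a')
    (b₁ a₁ b₂ a₂ : α) (h₁ : IsCube b₁ a₁) (h₂ : IsCube b₂ a₂) :
    Set.Icc b₁ a₁ ∩ Set.Icc b₂ a₂ = ∅ ∨
    ∃ b₃ a₃, Set.Icc b₁ a₁ ∩ Set.Icc b₂ a₂ = Set.Icc b₃ a₃ ∧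
      IsFace IsCube b₃ a₃ b₁ a₁ ∧ IsFace IsCube b₃ a₃ b₂ a₂ := by
  set S := Set.Icc b₁ a₁ ∩ Set.Icc b₂ a₂ with hSdef
  rcases S.eq_empty_or_nonempty with he | ⟨x, hx⟩
  · exact Or.inl he
  right
  have hSfin : S.Finite := (hfin b₁ a₁ h₁).subset Set.inter_subset_left
  set F := hSfin.toFinset with hF
  have hFne : F.Nonempty := ⟨x, hSfin.mem_toFinset.mpr hx⟩
  set a₃ := F.sup' hFne id with ha₃
  have hclosed : ∀ y ∈ S, ∀ z ∈ S, (y ⊔ z) ∈ S := by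
    intro y hy z hz
    exact ⟨⟨le_sup_of_le_left hy.1.1, sup_le hy.1.2 hz.1.2⟩,
      ⟨le_sup_of_le_left hy.2.1, sup_le hy.2.2 hz.2.2⟩⟩
  have ha₃mem : a₃ ∈ S :=
    Finset.sup'_mem S hclosed F hFne id (fun i hi => hSfin.mem_toFinset.mp hi)
  have hb₃mem : b₁ ⊔ b₂ ∈ S :=
    ⟨⟨le_sup_left, sup_le hx.1.1 hx.2.1 |>.trans hx.1.2⟩,
     ⟨le_sup_right, sup_le hx.1.1 hx.2.1 |>.trans hx.2.2⟩⟩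
  refine ⟨b₁ ⊔ b₂, a₃, ?_, ?_, ?_⟩
  · apply Set.eq_of_subset_of_subset
    · intro z hz
      exact ⟨sup_le hz.1.1 hz.2.1, Finset.le_sup' id (hSfin.mem_toFinset.mpr hz)⟩
    · intro z hz
      exact ⟨⟨hb₃mem.1.1.trans hz.1, hz.2.trans ha₃mem.1.2⟩,
        ⟨hb₃mem.2.1.trans hz.1, hz.2.trans ha₃mem.2.2⟩⟩
  · have hle : b₁ ⊔ b₂ ≤ a₃ := sup_le ha₃mem.1.1 ha₃mem.2.1
    exact ⟨hsub b₁ a₁ _ _ h₁ le_sup_left hle ha₃mem.1.2, le_sup_left, ha₃mem.1.2⟩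
  · have hle : b₁ ⊔ b₂ ≤ a₃ := sup_le ha₃mem.1.1 ha₃mem.2.1
    exact ⟨hsub b₂ a₂ _ _ h₂ le_sup_right hle ha₃mem.2.2, le_sup_right, ha₃mem.2.2⟩
end

section
/- The stabilizer of the vertex [f] in the action of the rearrangement group 𝒢 on K⁰(𝒢), where f : X(G₀) → X(G), is isomorphic to the automorphism group of the directed graph G; hence if G has finite automorphism group, all vertex stabilizers are finite. -/
open CategoryTheory

/-- The stabilizer of the vertex `[f]` (where `f : X(G₀) → X(G)`)
in the action of the rearrangement group `𝒢` on `K⁰(𝒢)` is isomorphic to the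
automorphism group of the directed graph `G`; hence if `G` has finite automorphism
group, all vertex stabilizers are finite.

The groupoid `C` is the groupoid of rearrangements; `𝒢 = (G₀ ⟶ G₀)` acts on classes
by right composition, so the stabilizer of `[f]` is
`{g : G₀ ⟶ G₀ | ∃ base ψ, g ≫ f = f ≫ ψ}`.  The automorphism group of the graph `G`
is (naturally isomorphic to) the group of base automorphisms
`{ψ : G ⟶ G | IsBase ψ}`.  The conclusion produces a bijection between the base
automorphism group and the stabilizer that preserves composition (i.e. a group
isomorphism), together with the resulting finiteness statement. -/
theorem stmt_18 {C : Type*} [Groupoid C]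
    (IsBase : ∀ A B : C, (A ⟶ B) → Prop)
    (hid : ∀ A : C, IsBase A A (𝟙 A))
    (hcomp : ∀ (A B D : C) (f : A ⟶ B) (g : B ⟶ D),
      IsBase A B f → IsBase B D g → IsBase A D (f ≫ g))
    (hinv : ∀ (A B : C) (f : A ⟶ B), IsBase A B f → IsBase B A (Groupoid.inv f))
    (G₀ G : C) (f : G₀ ⟶ G) :
    ∃ e : {ψ : G ⟶ G // IsBase G G ψ} ≃
        {g : G₀ ⟶ G₀ // ∃ ψ : G ⟶ G, IsBase G G ψ ∧ g ≫ f = f ≫ ψ},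
      (∀ x y z : {ψ : G ⟶ G // IsBase G G ψ},
        x.1 ≫ y.1 = z.1 → (e x).1 ≫ (e y).1 = (e z).1) ∧
      (Finite {ψ : G ⟶ G // IsBase G G ψ} →
        Finite {g : G₀ ⟶ G₀ // ∃ ψ : G ⟶ G, IsBase G G ψ ∧ g ≫ f = f ≫ ψ}) := by
  have key : Function.Bijective
      (fun (x : {ψ : G ⟶ G // IsBase G G ψ}) =>
        (⟨f ≫ x.1 ≫ Groupoid.inv f,
          ⟨x.1, x.2, by simp⟩⟩ :
          {g : G₀ ⟶ G₀ // ∃ ψ : G ⟶ G, IsBase G G ψ ∧ g ≫ f = f ≫ ψ})) := by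
    constructor
    · rintro ⟨x, hx⟩ ⟨y, hy⟩ h
      simp only [Subtype.mk.injEq] at h ⊢
      have := congrArg (fun t => Groupoid.inv f ≫ t ≫ f) h
      simpa using this
    · rintro ⟨g, ψ, hψ, hgf⟩
      refine ⟨⟨ψ, hψ⟩, ?_⟩
      simp only [Subtype.mk.injEq]
      rw [← Category.assoc, ← hgf]; simp
  refine ⟨Equiv.ofBijective _ key, ?_, fun h => Finite.of_equiv _ (Equiv.ofBijective _ key)⟩
  rintro x y z h
  simp only [Equiv.ofBijective_apply]
  rw [← h]; simp
end

section
/- Let T_G be the tree associated to a graph G in the n-th Vicsek graph family (vertices of T_G are the sources of G, with edges between sources at distance two in G). If G has at least 2mn edges, then G has at least m collapsible subgraphs. -/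
/-!
Let `S` be the set of sources of `G` and `K₂` the set of sinks with two parents. Counting the
edges of the tree `G` by their heads gives `|V| - 1 = |V| - |S| + |K₂|`, so `|S| = |K₂| + 1`.
Two sources are adjacent in `T_G` exactly when they are the two parents of a sink in `K₂`, and
since `G` has no cycles two sources share at most one sink, so the degrees in `T_G` add up to
`2|K₂| = 2|S| - 2`. When `|S| ≥ 2` every source has degree at least one by connectivity, and
comparing each degree with `3` then gives `|S| + 2 ≤ 2d₁ + d₂`, where `dᵢ` is the number of
sources of degree `i`. Finally `n|S|` is the number of edges, so `2m ≤ |S|`.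
-/

open scoped Classical

open Finset

theorem SimpleGraph.IsAcyclic.eq_of_adj_of_adj {V : Type*} {G : SimpleGraph V}
    (hG : G.IsAcyclic) {v w x y : V} (hvw : v ≠ w) (hvx : G.Adj v x) (hwx : G.Adj w x)
    (hvy : G.Adj v y) (hwy : G.Adj w y) : x = y := by
  have isPath : ∀ {z} (hvz : G.Adj v z) (hwz : G.Adj w z),
      (Walk.cons hvz (.cons hwz.symm .nil)).IsPath :=
    fun hvz hwz => by simp [hvz.ne, hwz.ne.symm, hvw]
  have := (hG.subsingleton_path v w).elim ⟨_, isPath hvx hwx⟩ ⟨_, isPath hvy hwy⟩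
  simp only [Subtype.mk.injEq, Walk.cons.injEq] at this
  exact this.1

theorem SimpleGraph.Preconnected.mem_of_forall_adj {V : Type*} {G : SimpleGraph V}
    (hG : G.Preconnected) {s : Set V} {a : V} (ha : a ∈ s)
    (hs : ∀ b c, G.Adj b c → b ∈ s → c ∈ s) (b : V) : b ∈ s := by
  induction (G.reachable_iff_reflTransGen a b).mp (hG a b) with
  | refl => exact ha
  | tail _ hcd ih => exact hs _ _ hcd ih

theorem Finset.sum_add_card_filter_eq_zero {α : Type*} [Fintype α] {f : α → ℕ}
    (hf : ∀ a, f a ≤ 2) : ∑ a, f a + #{a | f a = 0} = Fintype.card α + #{a | f a = 2} := by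
  have hpt : ∀ a, f a + (if f a = 0 then 1 else 0) = 1 + if f a = 2 then 1 else 0 := by
    intro a
    have := hf a
    split_ifs <;> omega
  rw [← card_univ]
  simpa only [sum_add_distrib, sum_boole, sum_const, smul_eq_mul, mul_one, Nat.cast_id]
    using sum_congr rfl fun a _ => hpt a

theorem Finset.card_add_two_le_of_sum_add_two_le {α : Type*} {s : Finset α} {f : α → ℕ}
    (hf : ∀ a ∈ s, 1 ≤ f a) (hsum : ∑ a ∈ s, f a + 2 ≤ 2 * #s) :
    #s + 2 ≤ 2 * #{a ∈ s | f a = 1} + #{a ∈ s | f a = 2} := by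
  have hpt : ∀ a ∈ s, 3 ≤ f a + ((if f a = 1 then 2 else 0) + if f a = 2 then 1 else 0) := by
    intro a ha
    have := hf a ha
    split_ifs <;> omega
  have := sum_le_sum hpt
  simp only [sum_const, smul_eq_mul, sum_add_distrib, ← sum_filter] at this
  omega

noncomputable section OrientedTree

variable {V : Type*} [Fintype V] {A : V → V → Prop}

def inDeg (A : V → V → Prop) (v : V) : ℕ := #{u | A u v}

def outDeg (A : V → V → Prop) (v : V) : ℕ := #{u | A v u}

/-- For a source `v`, its degree in `T_G`. -/
def tDeg (A : V → V → Prop) (v : V) : ℕ := #{w | w ≠ v ∧ ∃ x, A v x ∧ A w x}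

theorem inDeg_eq_zero_iff {v : V} : inDeg A v = 0 ↔ ∀ u, ¬ A u v := by
  simp [inDeg, filter_eq_empty_iff]

theorem outDeg_eq_zero_iff {v : V} : outDeg A v = 0 ↔ ∀ u, ¬ A v u := by
  simp [outDeg, filter_eq_empty_iff]

theorem tDeg_eq_zero_iff {v : V} : tDeg A v = 0 ↔ ∀ x, A v x → ∀ w, A w x → w = v := by
  simp only [tDeg, card_eq_zero, filter_eq_empty_iff, mem_univ, true_implies, not_and, not_exists]
  exact ⟨fun h x hvx w hwx => by_contra fun hwv => h hwv x hvx hwx,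
    fun h w hwv x hvx hwx => hwv (h x hvx w hwx)⟩

theorem sum_inDeg_eq_sum_outDeg : ∑ v, inDeg A v = ∑ v, outDeg A v := by
  simp only [inDeg, outDeg, card_filter]
  exact sum_comm

theorem sum_outDeg_add_one_eq_card (hasymm : ∀ u v, A u v → ¬ A v u)
    (htree : (SimpleGraph.fromRel A).IsTree) : ∑ v, outDeg A v + 1 = Fintype.card V := by
  rw [← htree.card_edgeFinset, add_left_inj]
  have : ∑ v, outDeg A v = #{p : V × V | A p.1 p.2} := by
    simp only [outDeg, card_filter, ← univ_product_univ, sum_product]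
  rw [this]
  refine card_bij (fun p _ => s(p.1, p.2)) ?_ ?_ ?_
  · intro p hp
    simp only [mem_filter, mem_univ, true_and] at hp
    simpa [hp] using fun h : p.1 = p.2 => hasymm _ _ hp (h ▸ hp)
  · rintro p hp q hq hpq
    simp only [mem_filter, mem_univ, true_and] at hp hq
    rcases Sym2.eq_iff.mp hpq with ⟨h1, h2⟩ | ⟨h1, h2⟩
    · exact Prod.ext h1 h2
    · exact absurd hq (h1 ▸ h2 ▸ hasymm _ _ hp)
  · intro e he
    induction e with
    | _ u v =>
      simp only [SimpleGraph.mem_edgeFinset] at he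
      rcases he.2 with h | h
      · exact ⟨(u, v), by simpa using h, rfl⟩
      · exact ⟨(v, u), by simpa using h, Sym2.eq_swap⟩

theorem card_inDeg_eq_zero_eq_card_inDeg_eq_two_add_one (hasymm : ∀ u v, A u v → ¬ A v u)
    (htree : (SimpleGraph.fromRel A).IsTree) (hin : ∀ v, inDeg A v ≤ 2) :
    #{v | inDeg A v = 0} = #{v | inDeg A v = 2} + 1 := by
  have := sum_add_card_filter_eq_zero hin
  rw [sum_inDeg_eq_sum_outDeg, ← sum_outDeg_add_one_eq_card hasymm htree] at this
  omega

theorem sum_outDeg_eq_mul_card_inDeg_eq_zero {n : ℕ}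
    (hsrcsink : ∀ v, inDeg A v = 0 ∨ outDeg A v = 0)
    (hsource : ∀ v, inDeg A v = 0 → outDeg A v = n) :
    ∑ v, outDeg A v = n * #{v | inDeg A v = 0} := by
  have hpt : ∀ v, outDeg A v = if inDeg A v = 0 then n else 0 := by
    intro v
    split_ifs with h
    · exact hsource v h
    · exact (hsrcsink v).resolve_left h
  rw [sum_congr rfl fun v _ => hpt v, sum_ite, sum_const_zero, sum_const, smul_eq_mul, add_zero,
    mul_comm]

theorem tDeg_eq_sum (hirrefl : ∀ v, ¬ A v v) (hacyc : (SimpleGraph.fromRel A).IsAcyclic)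
    (v : V) : tDeg A v = ∑ x with A v x, (inDeg A x - 1) := by
  have hadj : ∀ {a b}, A a b → (SimpleGraph.fromRel A).Adj a b :=
    fun {a b} h => ⟨fun hab => hirrefl a (hab ▸ h), Or.inl h⟩
  have hunion : ({w | w ≠ v ∧ ∃ x, A v x ∧ A w x} : Finset V)
      = ({x | A v x} : Finset V).biUnion fun x => ({u | A u x} : Finset V).erase v := by
    ext w
    simp only [mem_filter, mem_univ, true_and, mem_biUnion, mem_erase]
    exact ⟨fun ⟨hwv, x, hvx, hwx⟩ => ⟨x, hvx, hwv, hwx⟩,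
      fun ⟨x, hvx, hwv, hwx⟩ => ⟨hwv, x, hvx, hwx⟩⟩
  rw [tDeg, hunion, card_biUnion]
  · refine sum_congr rfl fun x hx => ?_
    rw [card_erase_of_mem (by simpa using hx), inDeg]
  · intro x hx y hy hxy
    simp only [Function.onFun, disjoint_left, mem_erase, mem_filter, mem_univ, true_and]
    rintro w ⟨hwv, hwx⟩ ⟨-, hwy⟩
    simp only [coe_filter, mem_univ, true_and, Set.mem_ofPred_eq] at hx hy
    exact hxy (hacyc.eq_of_adj_of_adj (Ne.symm hwv) (hadj hx) (hadj hwx) (hadj hy) (hadj hwy))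

theorem sum_tDeg_eq (hirrefl : ∀ v, ¬ A v v) (hacyc : (SimpleGraph.fromRel A).IsAcyclic) :
    ∑ v, tDeg A v = ∑ x, inDeg A x * (inDeg A x - 1) := by
  simp only [tDeg_eq_sum hirrefl hacyc, sum_filter]
  rw [sum_comm]
  refine sum_congr rfl fun x _ => ?_
  rw [← sum_filter, sum_const, smul_eq_mul, inDeg]

theorem sum_tDeg_eq_two_mul_card (hirrefl : ∀ v, ¬ A v v)
    (hacyc : (SimpleGraph.fromRel A).IsAcyclic) (hin : ∀ v, inDeg A v ≤ 2) :
    ∑ v, tDeg A v = 2 * #{v | inDeg A v = 2} := by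
  have hpt : ∀ x, inDeg A x * (inDeg A x - 1) = if inDeg A x = 2 then 2 else 0 := by
    intro x
    have := hin x
    interval_cases inDeg A x <;> rfl
  rw [sum_tDeg_eq hirrefl hacyc, sum_congr rfl fun x _ => hpt x, sum_ite, sum_const_zero,
    sum_const, smul_eq_mul, add_zero, mul_comm]

theorem inDeg_eq_zero_of_tDeg_ne_zero (hsrcsink : ∀ v, inDeg A v = 0 ∨ outDeg A v = 0)
    {v : V} (hv : tDeg A v ≠ 0) : inDeg A v = 0 := by
  by_contra h
  have hout := (hsrcsink v).resolve_left h
  exact hv (tDeg_eq_zero_iff.mpr fun x hvx => absurd hvx (outDeg_eq_zero_iff.mp hout x))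

theorem one_le_tDeg (hconn : (SimpleGraph.fromRel A).Preconnected)
    (hsrcsink : ∀ v, inDeg A v = 0 ∨ outDeg A v = 0) {u v : V} (hu : inDeg A u = 0)
    (hv : inDeg A v = 0) (huv : u ≠ v) : 1 ≤ tDeg A v := by
  by_contra! h
  have hshare := tDeg_eq_zero_iff.mp (Nat.lt_one_iff.mp h)
  -- otherwise `v` together with its children is a connected component of the tree
  have hclosed :
      ∀ b c, (SimpleGraph.fromRel A).Adj b c → b = v ∨ A v b → c = v ∨ A v c := by
    rintro b c ⟨-, hbc | hcb⟩ (rfl | hvb)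
    · exact Or.inr hbc
    · have hb := (hsrcsink b).resolve_left fun h => inDeg_eq_zero_iff.mp h v hvb
      exact absurd hbc (outDeg_eq_zero_iff.mp hb c)
    · exact absurd hcb (inDeg_eq_zero_iff.mp hv c)
    · exact Or.inl (hshare b hvb c hcb)
  rcases hconn.mem_of_forall_adj (s := {a | a = v ∨ A v a}) (Or.inl rfl) hclosed u with
    rfl | hvu
  · exact huv rfl
  · exact inDeg_eq_zero_iff.mp hu v hvu

end OrientedTree

/-- Let `G` be a graph in the `n`-th Vicsek graph family (a finite
directed tree in which every vertex is a source or a sink, every source has exactly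
`n` outgoing edges, and every sink has one or two incoming edges), and let `T_G` be
the associated tree whose vertices are the sources of `G`, two sources being
adjacent when they are at distance two in `G`.  If `G` has at least `2mn` edges,
then `G` has at least `m` collapsible subgraphs.

Here `A u v` means `G` has a directed edge from `u` to `v`; the underlying
undirected graph is required to be a tree.  Collapsible subgraphs are counted via
the correspondence with the tree `T_G`: each vertex of degree 1 in `T_G`
contributes one collapsible subgraph and each vertex of degree 2 contributes two,
so that the number of collapsible subgraphs of `G` is at least
`#{degree-1 vertices of T_G} + 2·#{degree-2 vertices of T_G}`. -/
theorem stmt_19 {V : Type*} [Fintype V] (n m : ℕ) (hn : 1 ≤ n)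
    (A : V → V → Prop)
    (hirrefl : ∀ v, ¬ A v v)
    (hasymm : ∀ u v, A u v → ¬ A v u)
    (htree : (SimpleGraph.fromRel A).IsTree)
    (hsrcsink : ∀ v : V,
      (Finset.univ.filter (fun u => A u v)).card = 0 ∨
      (Finset.univ.filter (fun u => A v u)).card = 0)
    (hsource : ∀ v : V, (Finset.univ.filter (fun u => A u v)).card = 0 →
      (Finset.univ.filter (fun u => A v u)).card = n)
    (hsink : ∀ v : V, (Finset.univ.filter (fun u => A v u)).card = 0 →
      (Finset.univ.filter (fun u => A u v)).card = 1 ∨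
      (Finset.univ.filter (fun u => A u v)).card = 2)
    (hedges : 2 * m * n ≤ ∑ v : V, (Finset.univ.filter (fun u => A v u)).card) :
    m ≤ (Finset.univ.filter (fun v : V =>
          (Finset.univ.filter (fun u => A u v)).card = 0 ∧
          (Finset.univ.filter (fun w : V => w ≠ v ∧ ∃ x, A v x ∧ A w x)).card = 1)).card
      + 2 * (Finset.univ.filter (fun v : V =>
          (Finset.univ.filter (fun u => A u v)).card = 0 ∧
          (Finset.univ.filter (fun w : V => w ≠ v ∧ ∃ x, A v x ∧ A w x)).card = 2)).card := by
  change m ≤ #{v | inDeg A v = 0 ∧ tDeg A v = 1} + 2 * #{v | inDeg A v = 0 ∧ tDeg A v = 2}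
  rw [← filter_filter, ← filter_filter]
  set S : Finset V := {v | inDeg A v = 0}
  have hin : ∀ v, inDeg A v ≤ 2 := by
    intro v
    rcases hsrcsink v with h | h
    · exact h.trans_le (Nat.zero_le 2)
    · rcases hsink v h with h | h <;> exact h.trans_le (by norm_num)
  have hmS : 2 * m ≤ #S := by
    have : n * (2 * m) ≤ n * #S := calc
      n * (2 * m) = 2 * m * n := by ring
      _ ≤ ∑ v, outDeg A v := hedges
      _ = n * #S := sum_outDeg_eq_mul_card_inDeg_eq_zero hsrcsink hsource
    exact Nat.le_of_mul_le_mul_left this hn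
  obtain hS | hS := Nat.lt_or_ge #S 2
  · omega
  have hdeg : ∀ v ∈ S, 1 ≤ tDeg A v := fun v hv => by
    obtain ⟨u, hu, huv⟩ := exists_mem_ne hS v
    exact one_le_tDeg htree.connected.preconnected hsrcsink (mem_filter.mp hu).2
      (mem_filter.mp hv).2 huv
  have hsum : ∑ v ∈ S, tDeg A v + 2 = 2 * #S := by
    rw [sum_filter_of_ne fun v _ => inDeg_eq_zero_of_tDeg_ne_zero hsrcsink,
      sum_tDeg_eq_two_mul_card hirrefl htree.isAcyclic hin,
      card_inDeg_eq_zero_eq_card_inDeg_eq_two_add_one hasymm htree hin]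
    ring
  have := card_add_two_le_of_sum_add_two_le hdeg hsum.le
  omega
end
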